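/- arXiv:1910.03232 — 11 statements merged into one kernel-verified Lean document; each statement's English description precedes it below -/
import Mathlib

section
/- Let R be a commutative ring and A a finite R-algebra (i.e. finitely generated as an R-module). If a ∈ A has invertible image in A ⊗_R (R/m) for every maximal ideal m of R, then a is invertible in A. -/
open TensorProduct

/-- Nakayama-style lemma: if a submodule of a finite module becomes top after adding `m • ⊤`
for every maximal ideal `m`, then it is top. -/
lemma aux_eq_top_of_sup_smul {R A : Type*} [CommRing R] [AddCommGroup A] [Module R A]
    [Module.Finite R A] (N : Submodule R A)
    (h : ∀ m : Ideal R, m.IsMaximal → N ⊔ (m • ⊤ : Submodule R A) = ⊤) : N = ⊤ := by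
  by_contra hN
  have hc : IsCoatomic (Submodule R A) :=
    CompleteLattice.coatomic_of_top_compact
      ((Submodule.fg_iff_compact _).mp (Module.finite_def.mp inferInstance))
  rcases (hc.eq_top_or_exists_le_coatom N).resolve_left hN with ⟨P, hP, hNP⟩
  have : IsSimpleModule R (A ⧸ P) := isSimpleModule_iff_isCoatom.mpr hP
  set m := Module.annihilator R (A ⧸ P) with hm
  have hmax : m.IsMaximal := IsSimpleModule.annihilator_isMaximal
  have hsmul : (m • ⊤ : Submodule R A) ≤ P := by
    rw [Submodule.smul_le]
    intro r hr x _
    have : r • (Submodule.Quotient.mk x : A ⧸ P) = 0 :=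
      (Module.mem_annihilator.mp hr) _
    rwa [← Submodule.Quotient.mk_smul, Submodule.Quotient.mk_eq_zero] at this
  have := h m hmax
  have : (⊤ : Submodule R A) ≤ P := this ▸ sup_le hNP hsmul
  exact hP.1 (top_le_iff.mp this)

/-- If `A` is a finite algebra over a commutative ring `R` and `a : A` has invertible image
in `A ⊗[R] (R ⧸ m)` for every maximal ideal `m` of `R`, then `a` is invertible in `A`. -/
theorem stmt_0 {R A : Type*} [CommRing R] [Ring A] [Algebra R A] [Module.Finite R A]
    (a : A)
    (h : ∀ m : Ideal R, m.IsMaximal →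
      IsUnit (a ⊗ₜ[R] (1 : R ⧸ m) : A ⊗[R] (R ⧸ m))) :
    IsUnit a := by
  -- the range of left-multiplication by `a`
  set N : Submodule R A := LinearMap.range (LinearMap.mulLeft R a) with hNdef
  have hNtop : N = ⊤ := by
    apply aux_eq_top_of_sup_smul
    intro m hm
    obtain ⟨u, hu⟩ := h m hm
    set e := TensorProduct.tensorQuotEquivQuotSMul A m with he
    -- find `c : A` with `u⁻¹ = c ⊗ 1`
    obtain ⟨c, hc⟩ := Submodule.mkQ_surjective (m • ⊤ : Submodule R A) (e ↑u⁻¹)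
    have hcu : (↑u⁻¹ : A ⊗[R] (R ⧸ m)) = c ⊗ₜ[R] (1 : R ⧸ m) := by
      have := congrArg e.symm hc
      rw [LinearEquiv.symm_apply_apply] at this
      rw [← this]
      simp [he]
    have hone : a * c - 1 ∈ (m • ⊤ : Submodule R A) := by
      have h1 : (a ⊗ₜ[R] (1 : R ⧸ m)) * (c ⊗ₜ[R] (1 : R ⧸ m)) = 1 := by
        rw [← hcu, ← hu, Units.mul_inv]
      have h2 : ((a * c) ⊗ₜ[R] (1 : R ⧸ m) : A ⊗[R] (R ⧸ m)) = (1 : A) ⊗ₜ[R] 1 := by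
        rw [Algebra.TensorProduct.tmul_mul_tmul, mul_one] at h1
        rw [h1, Algebra.TensorProduct.one_def]
      have h3 := congrArg e h2
      have e1 : ∀ x : A, e (x ⊗ₜ[R] (1 : R ⧸ m)) = Submodule.Quotient.mk x := by
        intro x
        have : (1 : R ⧸ m) = Ideal.Quotient.mk m 1 := rfl
        rw [this, he, TensorProduct.tensorQuotEquivQuotSMul_tmul_mk, one_smul]
      rw [e1, e1] at h3
      rw [← Submodule.Quotient.mk_eq_zero, Submodule.Quotient.mk_sub, h3, sub_self]
    -- conclude `N ⊔ m • ⊤ = ⊤`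
    rw [eq_top_iff]
    intro x _
    have hx : x = a * (c * x) - (a * c - 1) * x := by noncomm_ring
    have h1 : a * (c * x) ∈ N := ⟨c * x, rfl⟩
    have h2 : (a * c - 1) * x ∈ (m • ⊤ : Submodule R A) := by
      refine Submodule.smul_induction_on hone ?_ ?_
      · intro r hr y _
        have : (r • y) * x = r • (y * x) := by rw [smul_mul_assoc]
        rw [this]
        exact Submodule.smul_mem_smul hr trivial
      · intro y z hy hz
        rw [add_mul]
        exact Submodule.add_mem _ hy hz
    rw [hx]
    exact Submodule.sub_mem _ (Submodule.mem_sup_left h1) (Submodule.mem_sup_right h2)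
  -- surjective endomorphism ⇒ injective
  have hsurj : Function.Surjective (LinearMap.mulLeft R a) :=
    LinearMap.range_eq_top.mp hNtop
  have hinj : Function.Injective (LinearMap.mulLeft R a) :=
    OrzechProperty.injective_of_surjective_endomorphism _ hsurj
  obtain ⟨b, hb⟩ := hsurj 1
  have hab : a * b = 1 := hb
  have hba : b * a = 1 := by
    apply hinj
    show a * (b * a) = a * 1
    rw [← mul_assoc, hab, one_mul, mul_one]
  exact ⟨⟨a, b, hab, hba⟩, rfl⟩
end

section
/- Let R be a commutative ring, A a finite projective R-algebra, P a finitely generated projective right A-module, and U, V direct summands of P (as A-modules). If P(m) = U(m) ⊕ V(m) for every maximal ideal m of R (where M(m) = M ⊗_R R/m), then P = U ⊕ V, i.e. the map (u,v) ↦ u+v : U × V → P is an isomorphism. -/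
open TensorProduct

/-!
Both halves are Nakayama's lemma over `R`. Since `P` is finite over `R` (as `A` is), the
cokernel of `(u, v) ↦ u + v` is a finite `R`-module with zero fibres, hence zero. The map is
then an `Aᵐᵒᵖ`-linear surjection onto the projective module `P`, so it splits; its kernel is a
direct summand of the finite `R`-module `U × V`, and the splitting keeps the kernel's fibres
inside those of `U × V`, where they are killed by the injectivity hypothesis.
-/

section Nakayama

variable {R M N : Type*} [CommRing R] [AddCommGroup M] [Module R M] [AddCommGroup N]
  [Module R N]

theorem Module.subsingleton_of_forall_isMaximal_smul_top_eq_top [Module.Finite R M]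
    (h : ∀ m : Ideal R, m.IsMaximal → m • (⊤ : Submodule R M) = ⊤) : Subsingleton M := by
  by_contra hM
  have hann : Module.annihilator R M ≠ ⊤ := by
    rw [Ne, Module.annihilator_eq_top_iff]
    exact hM
  obtain ⟨m, hm, hle⟩ := (Module.annihilator R M).exists_le_maximal hann
  obtain ⟨r, hr1, hr0⟩ := Submodule.exists_sub_one_mem_and_smul_eq_zero_of_fg_of_le_smul m
    (⊤ : Submodule R M) Module.Finite.fg_top (h m hm).ge
  have hr : r ∈ m := hle (Module.mem_annihilator.mpr fun x => hr0 x trivial)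
  exact hm.ne_top ((Ideal.eq_top_iff_one m).mpr (by simpa using m.sub_mem hr hr1))

theorem Module.subsingleton_of_forall_isMaximal_subsingleton_tensor [Module.Finite R M]
    (h : ∀ m : Ideal R, m.IsMaximal → Subsingleton ((R ⧸ m) ⊗[R] M)) : Subsingleton M :=
  Module.subsingleton_of_forall_isMaximal_smul_top_eq_top fun m hm => by
    have := h m hm
    exact Submodule.Quotient.subsingleton_iff.mp
      (quotTensorEquivQuotSMul M m).symm.injective.subsingleton

theorem LinearMap.surjective_of_forall_isMaximal_surjective_baseChange [Module.Finite R N]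
    (f : M →ₗ[R] N)
    (h : ∀ m : Ideal R, m.IsMaximal → Function.Surjective (f.baseChange (R ⧸ m))) :
    Function.Surjective f := by
  rw [← LinearMap.range_eq_top, ← Submodule.Quotient.subsingleton_iff]
  refine Module.subsingleton_of_forall_isMaximal_subsingleton_tensor (R := R) fun m hm => ?_
  have hmkQ : (LinearMap.range f).mkQ ∘ₗ f = 0 := by
    ext x
    simp
  have hsurj : Function.Surjective (((LinearMap.range f).mkQ).baseChange (R ⧸ m)) := by
    rw [LinearMap.baseChange_eq_ltensor]
    exact LinearMap.lTensor_surjective _ (Submodule.mkQ_surjective _)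
  refine subsingleton_iff_forall_eq 0 |>.mpr fun y => ?_
  obtain ⟨z, rfl⟩ := hsurj y
  obtain ⟨w, rfl⟩ := h m hm z
  rw [← LinearMap.comp_apply, ← LinearMap.baseChange_comp, hmkQ, LinearMap.baseChange_zero,
    LinearMap.zero_apply]

theorem LinearMap.injective_of_forall_isMaximal_injective_baseChange [Module.Finite R M]
    (f : M →ₗ[R] N) (s : N →ₗ[R] M) (hs : f ∘ₗ s = LinearMap.id)
    (h : ∀ m : Ideal R, m.IsMaximal → Function.Injective (f.baseChange (R ⧸ m))) :
    Function.Injective f := by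
  have hproj (x : M) : x - s (f x) ∈ LinearMap.ker f := by
    simp [← LinearMap.comp_apply f s, hs]
  let r : M →ₗ[R] LinearMap.ker f := (LinearMap.id - s ∘ₗ f).codRestrict _ hproj
  have hr : r ∘ₗ (LinearMap.ker f).subtype = LinearMap.id := by
    ext ⟨x, hx⟩
    simp [r, LinearMap.mem_ker.mp hx]
  have : Module.Finite R (LinearMap.ker f) :=
    Module.Finite.of_surjective r fun y => ⟨y, by simpa using LinearMap.congr_fun hr y⟩
  rw [← LinearMap.ker_eq_bot, ← Submodule.subsingleton_iff_eq_bot]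
  refine Module.subsingleton_of_forall_isMaximal_subsingleton_tensor (R := R) fun m hm => ?_
  have hfi : f ∘ₗ (LinearMap.ker f).subtype = 0 := by
    ext x
    exact x.2
  refine subsingleton_iff_forall_eq 0 |>.mpr fun y => ?_
  have hy : ((LinearMap.ker f).subtype.baseChange (R ⧸ m)) y = 0 := by
    refine (h m hm) ?_
    rw [← LinearMap.comp_apply, ← LinearMap.baseChange_comp, hfi, LinearMap.baseChange_zero,
      LinearMap.zero_apply, map_zero]
  simpa [← LinearMap.comp_apply, ← LinearMap.baseChange_comp, hr] using
    congrArg (r.baseChange (R ⧸ m)) hy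

end Nakayama

theorem Submodule.finite_of_isCompl {R M : Type*} [Ring R] [AddCommGroup M] [Module R M]
    [Module.Finite R M] {p q : Submodule R M} (h : IsCompl p q) : Module.Finite R p :=
  Module.Finite.of_surjective _ (Submodule.projectionOnto_surjective h)

theorem stmt_1_general {R A P : Type*} [CommRing R] [Ring A] [Algebra R A]
    [Module.Finite R A]
    [AddCommGroup P] [Module Aᵐᵒᵖ P] [Module R P] [IsScalarTower R Aᵐᵒᵖ P]
    [Module.Finite Aᵐᵒᵖ P] [Module.Projective Aᵐᵒᵖ P]
    (U V : Submodule Aᵐᵒᵖ P)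
    (hU : ∃ U', IsCompl U U') (hV : ∃ V', IsCompl V V')
    (h : ∀ m : Ideal R, m.IsMaximal →
      Function.Bijective
        (LinearMap.baseChange (R ⧸ m)
          ((LinearMap.coprod U.subtype V.subtype).restrictScalars R))) :
    Function.Bijective (LinearMap.coprod U.subtype V.subtype) := by
  obtain ⟨U', hU'⟩ := hU
  obtain ⟨V', hV'⟩ := hV
  have : Module.Finite R Aᵐᵒᵖ := .equiv (MulOpposite.opLinearEquiv R)
  have : Module.Finite R P := .trans Aᵐᵒᵖ P
  have : Module.Finite Aᵐᵒᵖ U := Submodule.finite_of_isCompl hU'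
  have : Module.Finite Aᵐᵒᵖ V := Submodule.finite_of_isCompl hV'
  have : Module.Finite R U := .trans Aᵐᵒᵖ U
  have : Module.Finite R V := .trans Aᵐᵒᵖ V
  set F := LinearMap.coprod U.subtype V.subtype
  have hsurj : Function.Surjective F :=
    (F.restrictScalars R).surjective_of_forall_isMaximal_surjective_baseChange
      fun m hm => (h m hm).surjective
  obtain ⟨s, hs⟩ := Module.projective_lifting_property F LinearMap.id hsurj
  exact ⟨(F.restrictScalars R).injective_of_forall_isMaximal_injective_baseChange
    (s.restrictScalars R) (congrArg (LinearMap.restrictScalars R) hs)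
    fun m hm => (h m hm).injective, hsurj⟩

/-- Let `R` be a commutative ring, `A` a finite projective `R`-algebra, `P` a finitely
generated projective right `A`-module and `U`, `V` direct summands of `P`.  If for every
maximal ideal `m` of `R` the map `(u,v) ↦ u + v : U × V → P` becomes an isomorphism after
base change along `R → R ⧸ m`, then it is an isomorphism, i.e. `P = U ⊕ V`. -/
theorem stmt_1 {R A P : Type*} [CommRing R] [Ring A] [Algebra R A]
    [Module.Finite R A] [Module.Projective R A]
    [AddCommGroup P] [Module Aᵐᵒᵖ P] [Module R P] [IsScalarTower R Aᵐᵒᵖ P]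
    [Module.Finite Aᵐᵒᵖ P] [Module.Projective Aᵐᵒᵖ P]
    (U V : Submodule Aᵐᵒᵖ P)
    (hU : ∃ U', IsCompl U U') (hV : ∃ V', IsCompl V V')
    (h : ∀ m : Ideal R, m.IsMaximal →
      Function.Bijective
        (LinearMap.baseChange (R ⧸ m)
          ((LinearMap.coprod U.subtype V.subtype).restrictScalars R))) :
    Function.Bijective (LinearMap.coprod U.subtype V.subtype) :=
  stmt_1_general U V hU hV h
end

section
/- Let R be a connected commutative ring with 2 invertible, and let S be a quadratic étale R-algebra (a commutative separable R-algebra that is finite projective of constant rank 2 as an R-module). If S is not connected (i.e. S has an idempotent other than 0 and 1), then S is isomorphic to R × R as an R-algebra. -/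
/-!
The idempotent `e` splits `S` as `S ⧸ (e) × S ⧸ (1 - e)`, both factors nonzero, finite and
projective. The rank of a finite projective module is locally constant on `Spec R`, which is
connected because `R` has no nontrivial idempotents; so each factor has constant rank, which is
positive since the factor is nonzero. The two ranks add up to the rank `2` of `S`, so both are
`1`, and a finite flat algebra of constant rank `1` is `R` itself.
-/

open TensorProduct

lemma PrimeSpectrum.preconnectedSpace_of_forall_isIdempotentElem {R : Type*} [CommRing R]
    (h : ∀ e : R, IsIdempotentElem e → e = 0 ∨ e = 1) : PreconnectedSpace (PrimeSpectrum R) := by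
  refine preconnectedSpace_iff_clopen.mpr fun s hs ↦ ?_
  obtain ⟨e, he, rfl⟩ := PrimeSpectrum.isClopen_iff.mp hs
  rcases h e he with rfl | rfl
  · simp
  · simp

namespace Module

variable {R M N : Type*} [CommRing R] [AddCommGroup M] [Module R M] [AddCommGroup N] [Module R N]

lemma rankAtStalk_eq_finrank_quotient_tensorProduct [Flat R M] [Module.Finite R M]
    (m : Ideal R) [m.IsMaximal] :
    rankAtStalk M ⟨m, inferInstance⟩ = finrank (R ⧸ m) ((R ⧸ m) ⊗[R] M) := by
  let : Field (R ⧸ m) := Ideal.Quotient.field m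
  have hcomap : (⊥ : PrimeSpectrum (R ⧸ m)).comap (algebraMap R (R ⧸ m)) = ⟨m, inferInstance⟩ :=
    PrimeSpectrum.ext (Ideal.mk_ker (I := m))
  rw [← hcomap, ← rankAtStalk_baseChange, rankAtStalk_eq_finrank_of_free, Pi.natCast_apply,
    Nat.cast_id]

/-- Every prime lies in a maximal ideal, and the rank of a finite flat module is unchanged under
specialization. -/
lemma rankAtStalk_eq_of_forall_finrank_quotient_tensorProduct [Flat R M] [Module.Finite R M]
    {n : ℕ} (h : ∀ m : Ideal R, m.IsMaximal → finrank (R ⧸ m) ((R ⧸ m) ⊗[R] M) = n)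
    (p : PrimeSpectrum R) : rankAtStalk M p = n := by
  obtain ⟨m, hm, hpm⟩ := p.asIdeal.exists_le_maximal p.isPrime.ne_top
  rw [rankAtStalk_eq_of_le_of_finite_of_flat' (R := R) (M := M) hpm,
    rankAtStalk_eq_finrank_quotient_tensorProduct, h m hm]

lemma rankAtStalk_pos_of_nontrivial [PreconnectedSpace (PrimeSpectrum R)]
    [FinitePresentation R M] [Flat R M] [Nontrivial M] (p : PrimeSpectrum R) :
    0 < rankAtStalk M p := by
  by_contra! hp
  have hzero : rankAtStalk (R := R) M = 0 := funext fun q ↦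
    (isLocallyConstant_rankAtStalk.apply_eq_of_preconnectedSpace q p).trans (Nat.le_zero.mp hp)
  exact not_subsingleton M (rankAtStalk_eq_zero_iff_subsingleton.mp hzero)

lemma rankAtStalk_eq_one_of_rankAtStalk_prod_eq_two [PreconnectedSpace (PrimeSpectrum R)]
    [Module.Finite R M] [Projective R M] [Nontrivial M]
    [Module.Finite R N] [Projective R N] [Nontrivial N]
    (h : ∀ p, rankAtStalk (R := R) (M × N) p = 2) :
    rankAtStalk (R := R) M = 1 ∧ rankAtStalk (R := R) N = 1 := by
  have := finitePresentation_of_projective R M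
  have := finitePresentation_of_projective R N
  have hsum (p : PrimeSpectrum R) : rankAtStalk M p + rankAtStalk N p = 2 := by
    rw [← h p, rankAtStalk_prod, Pi.add_apply]
  have hM := rankAtStalk_pos_of_nontrivial (R := R) (M := M)
  have hN := rankAtStalk_pos_of_nontrivial (R := R) (M := N)
  refine ⟨funext fun p ↦ ?_, funext fun p ↦ ?_⟩ <;>
    rw [Pi.one_apply] <;> linarith [hsum p, hM p, hN p]

end Module

theorem nonempty_algEquiv_prod_self_of_algEquiv_prod {R S A B : Type*} [CommRing R] [CommRing S]
    [CommRing A] [CommRing B] [Algebra R S] [Algebra R A] [Algebra R B] [Nontrivial A]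
    [Nontrivial B] [PreconnectedSpace (PrimeSpectrum R)] [Module.Finite R S]
    [Module.Projective R S] (hS : ∀ p, Module.rankAtStalk (R := R) S p = 2)
    (Φ : S ≃ₐ[R] A × B) : Nonempty (S ≃ₐ[R] R × R) := by
  have : Module.Projective R A :=
    .of_split (Φ.symm.toLinearMap ∘ₗ LinearMap.inl R _ _) (LinearMap.fst R _ _ ∘ₗ Φ.toLinearMap)
      (by ext x; simp)
  have : Module.Projective R B :=
    .of_split (Φ.symm.toLinearMap ∘ₗ LinearMap.inr R _ _) (LinearMap.snd R _ _ ∘ₗ Φ.toLinearMap)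
      (by ext x; simp)
  have : Module.Finite R A :=
    .of_surjective (LinearMap.fst R _ _ ∘ₗ Φ.toLinearMap) (Prod.fst_surjective.comp Φ.surjective)
  have : Module.Finite R B :=
    .of_surjective (LinearMap.snd R _ _ ∘ₗ Φ.toLinearMap) (Prod.snd_surjective.comp Φ.surjective)
  obtain ⟨hA, hB⟩ := Module.rankAtStalk_eq_one_of_rankAtStalk_prod_eq_two (R := R) (M := A)
    (N := B) fun p ↦ by rw [← Module.rankAtStalk_eq_of_equiv Φ.toLinearEquiv, hS]
  exact ⟨Φ.trans <| AlgEquiv.prodCongr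
    (AlgEquiv.ofBijective (Algebra.ofId R A) (Module.algebraMap_bijective_of_rankAtStalk hA)).symm
    (AlgEquiv.ofBijective (Algebra.ofId R B) (Module.algebraMap_bijective_of_rankAtStalk hB)).symm⟩

lemma Ideal.Quotient.nontrivial_span_singleton_of_isIdempotentElem {S : Type*} [CommRing S]
    {e : S} (he : IsIdempotentElem e) (he1 : e ≠ 1) : Nontrivial (S ⧸ Ideal.span {e}) := by
  rw [Ideal.Quotient.nontrivial_iff, ne_eq, Ideal.span_singleton_eq_top]
  exact fun hu ↦ he1 ((IsIdempotentElem.iff_eq_one_of_isUnit hu).mp he)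

theorem stmt_2_general {R S : Type*} [CommRing R] [CommRing S] [Algebra R S]
    (hconn : ∀ e : R, e * e = e → e = 0 ∨ e = 1)
    [Module.Finite R S] [Module.Projective R S]
    (hrank : ∀ m : Ideal R, m.IsMaximal →
      Module.finrank (R ⧸ m) ((R ⧸ m) ⊗[R] S) = 2)
    (e : S) (he : e * e = e) (he0 : e ≠ 0) (he1 : e ≠ 1) :
    Nonempty (S ≃ₐ[R] R × R) := by
  replace he : IsIdempotentElem e := he
  have := PrimeSpectrum.preconnectedSpace_of_forall_isIdempotentElem hconn
  have := Ideal.Quotient.nontrivial_span_singleton_of_isIdempotentElem he he1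
  have := Ideal.Quotient.nontrivial_span_singleton_of_isIdempotentElem he.one_sub
    fun h ↦ he0 (sub_eq_self.mp h)
  exact nonempty_algEquiv_prod_self_of_algEquiv_prod
    (Module.rankAtStalk_eq_of_forall_finrank_quotient_tensorProduct hrank)
    (AlgEquiv.prodQuotientOfIsIdempotentElem R he he.one_sub (add_sub_cancel e 1)
      he.mul_one_sub_self)

/-- Let `R` be a connected commutative ring with `2` invertible and `S` a quadratic étale
`R`-algebra (finite projective of rank `2`, commutative and separable, i.e. unramified).
If `S` has an idempotent other than `0` and `1`, then `S ≅ R × R` as `R`-algebras. -/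
theorem stmt_2 {R S : Type*} [CommRing R] [CommRing S] [Algebra R S]
    (h2 : IsUnit (2 : R))
    (hconn : ∀ e : R, e * e = e → e = 0 ∨ e = 1)
    [Module.Finite R S] [Module.Projective R S] [Algebra.FormallyUnramified R S]
    (hrank : ∀ m : Ideal R, m.IsMaximal →
      Module.finrank (R ⧸ m) ((R ⧸ m) ⊗[R] S) = 2)
    (e : S) (he : e * e = e) (he0 : e ≠ 0) (he1 : e ≠ 1) :
    Nonempty (S ≃ₐ[R] R × R) :=
  stmt_2_general hconn hrank e he he0 he1
end

section
/- Let R be a semilocal commutative ring with 2 invertible and S a quadratic étale R-algebra with standard involution θ. Then there exists λ ∈ S such that λ² is a unit of R, λ^θ = −λ, and {1, λ} is an R-basis of S. -/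
/-!
Since `2` is invertible, `S = R ⊕ S⁻` where `S⁻` is the `(-1)`-eigenspace of `θ`. Each fibre
`(R ⧸ m) ⊗ S` has dimension `2`, so `S⁻ ⊄ m S` for every maximal ideal `m`, and as there are
finitely many of them the Chinese remainder theorem gives one `λ ∈ S⁻` outside every `m S`.
Then `λ² = r ∈ R`, and `r` is a unit: otherwise `1 ⊗ λ` would be a nonzero nilpotent in a fibre,
but fibres of an unramified algebra are reduced. Every `μ ∈ S⁻` is `(μλ / r) • λ` with `μλ ∈ R`,
so `{1, λ}` spans; it is free because a finite projective module with nonzero fibres is faithful.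
-/

open TensorProduct

section

attribute [local instance] Ideal.Quotient.field

variable {R M : Type*} [CommRing R] [AddCommGroup M] [Module R M]

theorem TensorProduct.one_tmul_eq_zero_iff (I : Ideal R) (x : M) :
    (1 : R ⧸ I) ⊗ₜ[R] x = 0 ↔ x ∈ I • (⊤ : Submodule R M) := by
  rw [← (quotTensorEquivQuotSMul M I).map_eq_zero_iff, quotTensorEquivQuotSMul_mk_one_tmul,
    Submodule.Quotient.mk_eq_zero]

theorem finrank_quotient_tensor_le_one (I : Ideal R) [I.IsMaximal] (x₀ : M)
    (h : ∀ x : M, ∃ a : R, x - a • x₀ ∈ I • (⊤ : Submodule R M)) :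
    Module.finrank (R ⧸ I) ((R ⧸ I) ⊗[R] M) ≤ 1 := by
  refine finrank_le_one ((1 : R ⧸ I) ⊗ₜ x₀) fun w => ?_
  obtain ⟨x, rfl⟩ := TensorProduct.mk_surjective R M (R ⧸ I) Ideal.Quotient.mk_surjective w
  obtain ⟨a, ha⟩ := h x
  rw [← TensorProduct.one_tmul_eq_zero_iff, tmul_sub, sub_eq_zero, tmul_smul] at ha
  refine ⟨Ideal.Quotient.mk I a, ?_⟩
  rw [mk_apply, ha, ← Ideal.Quotient.algebraMap_eq, algebraMap_smul]

theorem Submodule.exists_mem_forall_notMem_smul_top [Finite (MaximalSpectrum R)]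
    (N : Submodule R M) (h : ∀ m : Ideal R, m.IsMaximal → ¬N ≤ m • ⊤) :
    ∃ x ∈ N, ∀ m : Ideal R, m.IsMaximal → x ∉ m • (⊤ : Submodule R M) := by
  classical
  have := Fintype.ofFinite (MaximalSpectrum R)
  choose μ hμN hμ using fun m : MaximalSpectrum R => Set.not_subset.mp (h m.asIdeal m.isMaximal)
  have hco : Pairwise (Function.onFun IsCoprime fun m : MaximalSpectrum R => m.asIdeal) :=
    fun m n hmn => Ideal.isCoprime_iff_sup_eq.mpr <|
      Ideal.IsMaximal.coprime_of_ne m.isMaximal n.isMaximal (mt MaximalSpectrum.ext hmn)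
  choose e he using fun m => Ideal.exists_forall_sub_mem_ideal hco fun n => if n = m then 1 else 0
  refine ⟨∑ m, e m • μ m, N.sum_mem fun m _ => N.smul_mem _ (hμN m), fun m hm hmem => hμ ⟨m, hm⟩ ?_⟩
  have hsub : ∑ n, e n • μ n - μ ⟨m, hm⟩ =
      ∑ n, (e n - if ⟨m, hm⟩ = n then 1 else 0) • μ n := by
    simp [sub_smul, Finset.sum_sub_distrib, ite_smul]
  have := Submodule.sub_mem _ hmem <| hsub ▸ Submodule.sum_mem _ fun n _ =>
    Submodule.smul_mem_smul (he n ⟨m, hm⟩) Submodule.mem_top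
  simpa using this

theorem algebraMap_injective_of_finrank_quotient_tensor_pos {S : Type*} [CommRing S] [Algebra R S]
    [Module.Finite R S] [Module.Flat R S]
    (h : ∀ m : Ideal R, m.IsMaximal → 0 < Module.finrank (R ⧸ m) ((R ⧸ m) ⊗[R] S)) :
    Function.Injective (algebraMap R S) := by
  rw [← Module.rankAtStalk_pos_iff_algebraMap_injective]
  intro p
  obtain ⟨m, hm, hpm⟩ := p.asIdeal.exists_le_maximal p.2.ne_top
  rw [Module.rankAtStalk_eq_of_le_of_finite_of_flat' S hpm, ← Ideal.finrank_fiber_eq_rankAtStalk,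
    ← (AlgebraTensorModule.cancelBaseChange R (R ⧸ m) m.ResidueField m.ResidueField S).finrank_eq,
    Module.finrank_baseChange]
  exact h m hm

theorem isUnit_of_mul_self_eq_algebraMap {S : Type*} [CommRing S] [Algebra R S]
    [Algebra.FormallyUnramified R S] [Module.Finite R S] {x : S} {r : R}
    (hx : x * x = algebraMap R S r)
    (hm : ∀ m : Ideal R, m.IsMaximal → x ∉ m • (⊤ : Submodule R S)) : IsUnit r := by
  by_contra hr
  obtain ⟨m, hm', hrm⟩ := exists_max_ideal_of_mem_nonunits (mem_nonunits_iff.mpr hr)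
  have := Algebra.FormallyUnramified.isReduced_of_field (R ⧸ m) ((R ⧸ m) ⊗[R] S)
  refine hm m hm' <| (TensorProduct.one_tmul_eq_zero_iff m x).mp <| IsReduced.eq_zero _ ⟨2, ?_⟩
  rw [pow_two, Algebra.TensorProduct.tmul_mul_tmul, one_mul, hx, TensorProduct.one_tmul_eq_zero_iff,
    Algebra.algebraMap_eq_smul_one]
  exact Submodule.smul_mem_smul hrm Submodule.mem_top

section Involution

variable {S : Type*} [CommRing S] [Algebra R S] {θ : S →ₐ[R] S}

theorem exists_apply_sub_algebraMap_eq_neg (h2 : IsUnit (2 : R)) (hinvol : ∀ s, θ (θ s) = s)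
    (hfix : ∀ s, θ s = s → s ∈ (algebraMap R S).range) (s : S) :
    ∃ a : R, θ (s - algebraMap R S a) = -(s - algebraMap R S a) := by
  obtain ⟨c, hc⟩ := hfix (s + θ s) (by rw [map_add, hinvol, add_comm])
  refine ⟨↑h2.unit⁻¹ * c, ?_⟩
  have hc2 : algebraMap R S c = 2 * algebraMap R S (↑h2.unit⁻¹ * c) := by
    rw [← map_ofNat (algebraMap R S), ← map_mul, ← mul_assoc, h2.mul_val_inv, one_mul]
  rw [map_sub, AlgHom.commutes, eq_sub_of_add_eq' hc.symm, hc2]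
  ring

theorem exists_eq_smul_of_apply_eq_neg (hfix : ∀ s, θ s = s → s ∈ (algebraMap R S).range)
    {x μ : S} {r : R} (hr : IsUnit r) (hx : x * x = algebraMap R S r) (hθx : θ x = -x)
    (hθμ : θ μ = -μ) : ∃ c : R, μ = c • x := by
  obtain ⟨c, hc⟩ := hfix (μ * x) (by rw [map_mul, hθx, hθμ, neg_mul_neg])
  refine ⟨↑hr.unit⁻¹ * c, ?_⟩
  rw [mul_smul, Algebra.smul_def c, hc, mul_assoc, hx, Algebra.smul_def, mul_left_comm,
    ← map_mul, hr.val_inv_mul, map_one, mul_one]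

theorem not_eigenspace_neg_one_le_smul_top (h2 : IsUnit (2 : R)) (hinvol : ∀ s, θ (θ s) = s)
    (hfix : ∀ s, θ s = s → s ∈ (algebraMap R S).range) (m : Ideal R) [m.IsMaximal]
    (hrank : 1 < Module.finrank (R ⧸ m) ((R ⧸ m) ⊗[R] S)) :
    ¬Module.End.eigenspace θ.toLinearMap (-1) ≤ m • ⊤ := by
  intro hle
  refine hrank.not_ge (finrank_quotient_tensor_le_one m 1 fun s => ?_)
  obtain ⟨a, ha⟩ := exists_apply_sub_algebraMap_eq_neg h2 hinvol hfix s
  refine ⟨a, ?_⟩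
  rw [← Algebra.algebraMap_eq_smul_one]
  exact hle (Module.End.mem_eigenspace_iff.mpr (by simpa using ha))

theorem linearIndependent_one_of_apply_eq_neg (hinj : Function.Injective (algebraMap R S))
    (h2 : IsUnit (2 : R)) {x : S} {r : R} (hr : IsUnit r) (hx : x * x = algebraMap R S r)
    (hθx : θ x = -x) : LinearIndependent R ![1, x] := by
  refine LinearIndependent.pair_iff.mpr fun s t hst => ?_
  have hθst : s • 1 - t • x = 0 := by
    simpa [hθx, sub_eq_add_neg] using congrArg θ hst
  have hs : s = 0 := by
    refine (h2.mul_right_eq_zero).mp (hinj ?_)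
    rw [map_mul, map_zero, map_ofNat, two_mul, Algebra.algebraMap_eq_smul_one]
    calc s • (1 : S) + s • 1 = (s • 1 + t • x) + (s • 1 - t • x) := by abel
      _ = 0 := by rw [hst, hθst, add_zero]
  subst hs
  refine ⟨rfl, hr.mul_left_eq_zero.mp (hinj ?_)⟩
  rw [zero_smul, zero_add] at hst
  rw [map_mul, map_zero, ← hx, ← mul_assoc, ← Algebra.smul_def, hst, zero_mul]

theorem exists_basis_one_of_apply_eq_neg (hinj : Function.Injective (algebraMap R S))
    (h2 : IsUnit (2 : R)) (hinvol : ∀ s, θ (θ s) = s)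
    (hfix : ∀ s, θ s = s → s ∈ (algebraMap R S).range) {x : S} {r : R} (hr : IsUnit r)
    (hx : x * x = algebraMap R S r) (hθx : θ x = -x) :
    ∃ b : Module.Basis (Fin 2) R S, b 0 = 1 ∧ b 1 = x := by
  have hspan : ⊤ ≤ Submodule.span R (Set.range ![1, x]) := by
    rintro s -
    obtain ⟨a, ha⟩ := exists_apply_sub_algebraMap_eq_neg h2 hinvol hfix s
    obtain ⟨c, hc⟩ := exists_eq_smul_of_apply_eq_neg hfix hr hx hθx ha
    rw [← sub_add_cancel s (algebraMap R S a), hc, Algebra.algebraMap_eq_smul_one]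
    exact add_mem (Submodule.smul_mem _ _ (Submodule.subset_span ⟨1, rfl⟩))
      (Submodule.smul_mem _ _ (Submodule.subset_span ⟨0, rfl⟩))
  exact ⟨.mk (linearIndependent_one_of_apply_eq_neg hinj h2 hr hx hθx) hspan, by simp, by simp⟩

end Involution

end

/-- Let `R` be a semilocal commutative ring with `2` invertible and `S` a quadratic étale
`R`-algebra with standard involution `θ` (the unique `R`-involution whose fixed ring is
exactly `R`).  Then there is `λ ∈ S` with `λ²` a unit of `R`, `θ λ = -λ`, and such that
`{1, λ}` is an `R`-basis of `S`. -/
theorem stmt_3 {R S : Type*} [CommRing R] [CommRing S] [Algebra R S]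
    (h2 : IsUnit (2 : R)) [Finite (MaximalSpectrum R)]
    [Module.Finite R S] [Module.Projective R S] [Algebra.FormallyUnramified R S]
    (hrank : ∀ m : Ideal R, m.IsMaximal →
      Module.finrank (R ⧸ m) ((R ⧸ m) ⊗[R] S) = 2)
    (θ : S →ₐ[R] S) (hinvol : ∀ s, θ (θ s) = s)
    (hfix : ∀ s : S, θ s = s ↔ s ∈ (algebraMap R S).range) :
    ∃ lm : S, (∃ r : R, IsUnit r ∧ lm * lm = algebraMap R S r) ∧
      θ lm = -lm ∧ ∃ b : Module.Basis (Fin 2) R S, b 0 = 1 ∧ b 1 = lm := by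
  have hfix' : ∀ s, θ s = s → s ∈ (algebraMap R S).range := fun s => (hfix s).mp
  obtain ⟨lm, hlm, havoid⟩ := Submodule.exists_mem_forall_notMem_smul_top _ fun m hm =>
    have := hm
    not_eigenspace_neg_one_le_smul_top h2 hinvol hfix' m (by rw [hrank m hm]; norm_num)
  have hanti : θ lm = -lm := by simpa using Module.End.mem_eigenspace_iff.mp hlm
  obtain ⟨r, hr⟩ := hfix' (lm * lm) (by rw [map_mul, hanti, neg_mul_neg])
  have hr_unit : IsUnit r := isUnit_of_mul_self_eq_algebraMap hr.symm havoid
  have hinj : Function.Injective (algebraMap R S) :=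
    algebraMap_injective_of_finrank_quotient_tensor_pos fun m hm => by rw [hrank m hm]; norm_num
  obtain ⟨b, hb0, hb1⟩ :=
    exists_basis_one_of_apply_eq_neg hinj h2 hinvol hfix' hr_unit hr.symm hanti
  exact ⟨lm, ⟨r, hr_unit, hr.symm⟩, hanti, b, hb0, hb1⟩
end

section
/- Let (A, σ) be an associative unital ring with an involution σ, let J = Jac(A) be the Jacobson radical (which is σ-invariant), and let η ∈ A/J be an idempotent fixed by the induced involution. If η is the image of some idempotent of A, then η is the image of a σ-invariant idempotent of A (i.e. an idempotent f with f^σ = f and f + J = η). -/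
/-!
With `s = σ e`, both `e` and `s` are idempotents, and `c = (e - s)²` lies in `J`, is
`σ`-invariant and commutes with `e` and `s`. The element `z = e s` satisfies `z² = (1 - c) z`
and `σ z = z`, so with the `σ`-invariant unit `u = 1 - c`, which commutes with `z`, the element
`f = u⁻¹ z` is a `σ`-invariant idempotent, and `f ≡ z ≡ e` modulo `J`.
-/

section Idempotent

variable {A : Type*} [Ring A] {e s : A}

lemma IsIdempotentElem.commute_sub_sq_left (he : IsIdempotentElem e) (hs : IsIdempotentElem s) :
    Commute e ((e - s) ^ 2) := by
  have hee : ∀ x : A, e * (e * x) = e * x := fun x => by rw [← mul_assoc, he.eq]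
  simp only [Commute, SemiconjBy, sq, mul_sub, sub_mul, mul_assoc, he.eq, hs.eq, hee]
  abel

lemma IsIdempotentElem.commute_sub_sq_right (he : IsIdempotentElem e) (hs : IsIdempotentElem s) :
    Commute s ((e - s) ^ 2) := by
  rw [← neg_sub, neg_sq]
  exact hs.commute_sub_sq_left he

lemma IsIdempotentElem.mul_mul_mul_self (he : IsIdempotentElem e) (hs : IsIdempotentElem s) :
    e * s * (e * s) = (1 - (e - s) ^ 2) * (e * s) := by
  have hee : ∀ x : A, e * (e * x) = e * x := fun x => by rw [← mul_assoc, he.eq]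
  simp only [sq, mul_sub, sub_mul, one_mul, mul_assoc, he.eq, hs.eq, hee]
  abel

lemma isIdempotentElem_units_inv_mul {u : Aˣ} {z : A} (hz : z * z = u * z)
    (hu : Commute (u : A) z) : IsIdempotentElem (↑u⁻¹ * z) :=
  calc ↑u⁻¹ * z * (↑u⁻¹ * z) = ↑u⁻¹ * (↑u⁻¹ * (z * z)) := by
        rw [mul_assoc, ← mul_assoc z, ← hu.units_inv_left.eq, mul_assoc]
    _ = ↑u⁻¹ * z := by rw [hz, Units.inv_mul_cancel_left]

end Idempotent

lemma isUnit_of_sub_one_mem_jacobson_bot {A : Type*} [Ring A] {r : A}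
    (hr : r - 1 ∈ Ideal.jacobson (⊥ : Ideal A)) : IsUnit r := by
  obtain ⟨s, hs⟩ := Ideal.exists_mul_sub_mem_of_sub_one_mem_jacobson r hr
  rw [Ideal.mem_bot, sub_eq_zero] at hs
  have hs1 : s - 1 ∈ Ideal.jacobson (⊥ : Ideal A) := by
    rw [show s - 1 = -s * (r - 1) by rw [neg_mul, mul_sub, hs, mul_one, neg_sub]]
    exact Ideal.mul_mem_left _ _ hr
  obtain ⟨t, ht⟩ := Ideal.exists_mul_sub_mem_of_sub_one_mem_jacobson s hs1
  rw [Ideal.mem_bot, sub_eq_zero] at ht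
  have htr : t = r := left_inv_eq_right_inv ht hs
  exact ⟨⟨r, s, htr ▸ ht, hs⟩, rfl⟩

section Involution

variable {A : Type*} [Ring A] {σ : A → A}

lemma map_sub_of_map_add (hadd : ∀ x y, σ (x + y) = σ x + σ y) (x y : A) :
    σ (x - y) = σ x - σ y :=
  map_sub (AddMonoidHom.mk' σ hadd) x y

lemma map_units_inv_of_map_eq (hmul : ∀ x y, σ (x * y) = σ y * σ x) (hone : σ 1 = 1)
    {u : Aˣ} (hu : σ u = u) : σ ↑u⁻¹ = ↑u⁻¹ :=
  Units.eq_inv_of_mul_eq_one_right <| by rw [← hu, ← hmul, Units.mul_inv, hone]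

end Involution

/-- Let `A` be a ring with involution `σ` and let `J = Jac(A)` be its Jacobson radical.
If `e` is an idempotent of `A` whose image in `A/J` is fixed by the induced involution
(i.e. `σ e - e ∈ J`), then there is a `σ`-invariant idempotent of `A` with the same
image in `A/J`. -/
theorem stmt_6 {A : Type*} [Ring A] (σ : A → A)
    (hadd : ∀ x y, σ (x + y) = σ x + σ y)
    (hmul : ∀ x y, σ (x * y) = σ y * σ x)
    (hone : σ 1 = 1) (hinvol : ∀ x, σ (σ x) = x)
    (e : A) (he : e * e = e)
    (hfix : σ e - e ∈ Ideal.jacobson (⊥ : Ideal A)) :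
    ∃ f : A, f * f = f ∧ σ f = f ∧ f - e ∈ Ideal.jacobson (⊥ : Ideal A) := by
  set J := Ideal.jacobson (⊥ : Ideal A)
  replace he : IsIdempotentElem e := he
  set s := σ e with hs_def
  have hs : IsIdempotentElem s := by rw [IsIdempotentElem, ← hmul, he]
  have hsub := map_sub_of_map_add hadd
  have hc : (e - s) ^ 2 ∈ J := by
    rw [sq, ← neg_sub]
    exact J.mul_mem_left _ (J.neg_mem hfix)
  have hσc : σ ((e - s) ^ 2) = (e - s) ^ 2 := by
    rw [sq, hmul, hsub, hinvol, ← hs_def, ← neg_sub e s, neg_mul_neg]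
  set c := (e - s) ^ 2
  obtain ⟨u, hu⟩ := isUnit_of_sub_one_mem_jacobson_bot (r := 1 - c) (by simpa using J.neg_mem hc)
  have hσu : σ u = u := by rw [hu, hsub, hone, hσc]
  have hcomm : Commute (u : A) (e * s) := by
    rw [hu]
    exact (Commute.one_left _).sub_left
      (((he.commute_sub_sq_left hs).mul_left (he.commute_sub_sq_right hs)).symm)
  refine ⟨↑u⁻¹ * (e * s),
    (isIdempotentElem_units_inv_mul (hu ▸ he.mul_mul_mul_self hs) hcomm).eq, ?_, ?_⟩
  · rw [hmul, hmul, hinvol, ← hs_def, map_units_inv_of_map_eq hmul hone hσu,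
      hcomm.units_inv_left.eq]
  · have hfe : ↑u⁻¹ * (e * s) - e = ↑u⁻¹ * (e * (s - e) + c * e) :=
      calc ↑u⁻¹ * (e * s) - e = ↑u⁻¹ * (e * s) - ↑u⁻¹ * ((1 - c) * e) := by
            rw [← hu, Units.inv_mul_cancel_left]
        _ = ↑u⁻¹ * (e * (s - e) + c * e) := by rw [mul_sub e, he.eq]; noncomm_ring
    rw [hfe]
    exact J.mul_mem_left _ (J.add_mem (J.mul_mem_left _ hfix) (J.mul_mem_right _ hc))
end

section
/- Let A be a semilocal associative unital ring (A/Jac(A) is semisimple), write Ā = A/Jac(A), and let η ∈ Ā be an idempotent. Then there exists an idempotent e ∈ A with image η in Ā if and only if there exists a finitely generated projective right A-module P with P/(P·Jac(A)) isomorphic to ηĀ as right A-modules. -/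
/-!
If `e` lifts `η`, then `eA` is a direct summand of `A`, and `x ↦ π x` identifies
`eA / eA·Jac(A)` with `π(e)B = ηB`.

Conversely, `P/PJ ≅ ηB` is cyclic, so by Nakayama `P` is cyclic; being projective, `P ≅ eA`
for an idempotent `e ∈ A`. Then `π(e)B ≅ ηB`, which gives `u, v ∈ B` with `v u = π e` and
`u v = η`. Lifting `u, v` to `y, x`, the element `c = e x y e` reduces to `π e`, hence is
invertible in the corner ring `eAe`, say with inverse `w`; then `y w x` is an idempotent
lifting `η`.
-/

open MulOpposite Submodule

universe u

namespace Ideal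

variable {A : Type*} [Ring A] {j : A}

theorem exists_mul_one_add_eq_one_of_mem_jacobson_bot (hj : j ∈ jacobson (⊥ : Ideal A)) :
    ∃ z, z * (1 + j) = 1 := by
  obtain ⟨z, hz⟩ := mem_jacobson_iff.1 hj 1
  rw [mem_bot, mul_one, sub_eq_zero] at hz
  exact ⟨z, by rw [mul_add, mul_one, add_comm, hz]⟩

theorem isUnit_one_add_of_mem_jacobson_bot (hj : j ∈ jacobson (⊥ : Ideal A)) :
    IsUnit (1 + j) := by
  obtain ⟨z, hz⟩ := exists_mul_one_add_eq_one_of_mem_jacobson_bot hj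
  -- `z = 1 - z * j` is again in `1 + J`, so it has a left inverse, which must be `1 + j`.
  have hz' : z = 1 + -(z * j) := by rw [← hz, mul_add, mul_one]; abel
  obtain ⟨w, hw⟩ := exists_mul_one_add_eq_one_of_mem_jacobson_bot (neg_mem (mul_mem_left _ z hj))
  rw [← hz'] at hw
  have hw' : w = 1 + j :=
    calc w = w * (z * (1 + j)) := by rw [hz, mul_one]
      _ = 1 + j := by rw [← mul_assoc, hw, one_mul]
  exact ⟨⟨1 + j, z, hw' ▸ hw, hz⟩, rfl⟩

theorem op_mem_jacobson_bot (hj : j ∈ jacobson (⊥ : Ideal A)) :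
    op j ∈ jacobson (⊥ : Ideal Aᵐᵒᵖ) := by
  refine mem_jacobson_iff.2 fun y => ?_
  obtain ⟨t, ht⟩ := isUnit_one_add_of_mem_jacobson_bot (mul_mem_right (unop y) _ hj)
  refine ⟨op ↑t⁻¹, mem_bot.2 (unop_injective ?_)⟩
  simp only [unop_sub, unop_add, unop_mul, unop_op, unop_one, unop_zero]
  rw [← mul_assoc, ← add_one_mul, add_comm _ (1 : A), ← ht, t.mul_inv, sub_self]

end Ideal

theorem Module.eq_top_of_sup_jacobson_eq_top {R M : Type*} [Ring R] [AddCommGroup M] [Module R M]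
    [Module.Finite R M] {N : Submodule R M} (h : N ⊔ Module.jacobson R M = ⊤) : N = ⊤ := by
  refine (eq_top_or_exists_le_coatom N).resolve_right ?_
  rintro ⟨m, hm, hNm⟩
  exact hm.1 (top_unique (h ▸ sup_le hNm (sInf_le hm)))

section RightModule

variable (A : Type*) [Ring A] (P : Type*) [AddCommGroup P] [Module Aᵐᵒᵖ P]

/-- `P·Jac(A)` for a right `A`-module `P`. -/
abbrev mulJacobson : Submodule Aᵐᵒᵖ P :=
  span Aᵐᵒᵖ {z : P | ∃ (p : P) (j : A), j ∈ Ideal.jacobson (⊥ : Ideal A) ∧ z = op j • p}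

variable {A P}

theorem mulJacobson_le_jacobson : mulJacobson A P ≤ Module.jacobson Aᵐᵒᵖ P := by
  refine span_le.2 ?_
  rintro _ ⟨p, j, hj, rfl⟩
  refine Ring.jacobson_smul_top_le Aᵐᵒᵖ P (smul_mem_smul ?_ mem_top)
  exact Ideal.jacobson_bot (R := Aᵐᵒᵖ) ▸ Ideal.op_mem_jacobson_bot hj

theorem eq_top_of_sup_mulJacobson_eq_top [Module.Finite Aᵐᵒᵖ P] {N : Submodule Aᵐᵒᵖ P}
    (h : N ⊔ mulJacobson A P = ⊤) : N = ⊤ :=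
  Module.eq_top_of_sup_jacobson_eq_top (top_unique (h ▸ sup_le_sup_left mulJacobson_le_jacobson N))

theorem map_mulJacobson {Q : Type*} [AddCommGroup Q] [Module Aᵐᵒᵖ Q] (E : P ≃ₗ[Aᵐᵒᵖ] Q) :
    (mulJacobson A P).map (E : P →ₗ[Aᵐᵒᵖ] Q) = mulJacobson A Q := by
  rw [map_span]
  congr 1
  ext z
  constructor
  · rintro ⟨_, ⟨p, j, hj, rfl⟩, rfl⟩
    exact ⟨E p, j, hj, map_smul E _ _⟩
  · rintro ⟨q, j, hj, rfl⟩
    exact ⟨op j • E.symm q, ⟨E.symm q, j, hj, rfl⟩, by simp⟩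

end RightModule

theorem exists_span_singleton_sup_eq_top {R M X : Type*} [Ring R] [AddCommGroup M] [Module R M]
    [AddCommGroup X] [Module R X] (N : Submodule R M) {x : X} (ψ : (M ⧸ N) ≃ₗ[R] span R {x}) :
    ∃ q : M, span R {q} ⊔ N = ⊤ := by
  have hx : span R {(⟨x, mem_span_singleton_self x⟩ : span R {x})} = ⊤ := by
    refine eq_top_iff.2 fun v _ => ?_
    obtain ⟨r, hr⟩ := mem_span_singleton.1 v.2
    exact mem_span_singleton.2 ⟨r, Subtype.ext hr⟩
  obtain ⟨q, hq⟩ := N.mkQ_surjective (ψ.symm ⟨x, mem_span_singleton_self x⟩)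
  refine ⟨q, sup_comm N _ ▸ (map_mkQ_eq_top N _).1 ?_⟩
  rw [map_span, Set.image_singleton, hq, ← Set.image_singleton, ← LinearEquiv.coe_coe, ← map_span,
    hx, Submodule.map_top, LinearEquiv.range]

section Corner

variable {A : Type*} [Ring A] {e : A}

/-- The right ideal `eA`, as a left ideal of `Aᵐᵒᵖ`. -/
abbrev cornerModule (e : A) : Submodule Aᵐᵒᵖ Aᵐᵒᵖ := span Aᵐᵒᵖ {op e}

theorem mem_cornerModule_iff (he : IsIdempotentElem e) {x : Aᵐᵒᵖ} :
    x ∈ cornerModule e ↔ x * op e = x := by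
  refine mem_span_singleton.trans ⟨?_, fun hx => ⟨x, hx⟩⟩
  rintro ⟨r, rfl⟩
  rw [smul_eq_mul, mul_assoc, ← op_mul, he.eq]

theorem cornerModule_projective (he : IsIdempotentElem e) :
    Module.Projective Aᵐᵒᵖ (cornerModule e) :=
  Module.Projective.of_split (cornerModule e).subtype
    ((LinearMap.toSpanSingleton Aᵐᵒᵖ Aᵐᵒᵖ (op e)).codRestrict _
      fun x => smul_mem _ x (mem_span_singleton_self _))
    (LinearMap.ext fun x => Subtype.ext ((mem_cornerModule_iff he).1 x.2))

/-- A cyclic projective module `P = qA` is a direct summand of `A` via a splitting `s` of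
`a ↦ q a`, and then `s q` is an idempotent generating the image of `s`. -/
theorem exists_linearEquiv_cornerModule {P : Type*} [AddCommGroup P] [Module Aᵐᵒᵖ P]
    [Module.Projective Aᵐᵒᵖ P] {q : P} (hq : span Aᵐᵒᵖ {q} = ⊤) :
    ∃ e : A, IsIdempotentElem e ∧ Nonempty (P ≃ₗ[Aᵐᵒᵖ] cornerModule e) := by
  set φ := LinearMap.toSpanSingleton Aᵐᵒᵖ P q
  have hφ : Function.Surjective φ := by
    rw [← LinearMap.range_eq_top, ← LinearMap.span_singleton_eq_range, hq]
  obtain ⟨s, hs⟩ := Module.projective_lifting_property φ LinearMap.id hφ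
  have hφs : ∀ p, φ (s p) = p := LinearMap.congr_fun hs
  have hsφ : ∀ r, s (φ r) = r * s q := fun r => by
    rw [LinearMap.toSpanSingleton_apply, map_smul, smul_eq_mul]
  have he : IsIdempotentElem (unop (s q)) := by
    rw [IsIdempotentElem, ← unop_mul, ← hsφ, hφs]
  have hrange : LinearMap.range s = cornerModule (unop (s q)) := by
    ext x
    rw [mem_cornerModule_iff he, op_unop]
    exact ⟨fun ⟨p, hp⟩ => hp ▸ by rw [← hsφ, hφs], fun hx => ⟨φ x, by rw [hsφ, hx]⟩⟩
  exact ⟨_, he, ⟨(LinearEquiv.ofInjective s (Function.LeftInverse.injective hφs)).trans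
    (LinearEquiv.ofEq _ _ hrange)⟩⟩

end Corner

section Reduction

variable {A B : Type*} [Ring A] [Ring B] {π : A →+* B} [Module Aᵐᵒᵖ B]

theorem smul_eq_mul_map_unop (hsmul : ∀ (a : A) (b : B), op a • b = b * π a) (r : Aᵐᵒᵖ) (b : B) :
    r • b = b * π (unop r) := by
  simpa using hsmul (unop r) b

variable (B) in
/-- The reduction `eA → B`, `x ↦ π x`, written as `x ↦ x • 1` so that it is visibly linear. -/
def cornerReduction (e : A) : cornerModule e →ₗ[Aᵐᵒᵖ] B :=
  (LinearMap.toSpanSingleton Aᵐᵒᵖ B 1).comp (cornerModule e).subtype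

theorem cornerReduction_apply (hsmul : ∀ (a : A) (b : B), op a • b = b * π a) {e : A}
    (x : cornerModule e) : cornerReduction B e x = π (unop (x : Aᵐᵒᵖ)) := by
  rw [cornerReduction, LinearMap.comp_apply, LinearMap.toSpanSingleton_apply,
    smul_eq_mul_map_unop hsmul, one_mul, subtype_apply]

theorem range_cornerReduction (hsmul : ∀ (a : A) (b : B), op a • b = b * π a) (e : A) :
    LinearMap.range (cornerReduction B e) = span Aᵐᵒᵖ {π e} := by
  rw [cornerReduction, LinearMap.range_comp, range_subtype, map_span, Set.image_singleton,
    LinearMap.toSpanSingleton_apply, hsmul, one_mul]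

theorem ker_cornerReduction (hsmul : ∀ (a : A) (b : B), op a • b = b * π a)
    (hker : ∀ x : A, π x = 0 ↔ x ∈ Ideal.jacobson (⊥ : Ideal A)) {e : A}
    (he : IsIdempotentElem e) :
    LinearMap.ker (cornerReduction B e) = mulJacobson A (cornerModule e) := by
  refine le_antisymm (fun z hz => subset_span ?_) (span_le.2 ?_)
  · rw [LinearMap.mem_ker, cornerReduction_apply hsmul, hker] at hz
    refine ⟨⟨op e, mem_span_singleton_self _⟩, unop (z : Aᵐᵒᵖ), hz, Subtype.ext ?_⟩
    rw [coe_smul, op_unop, smul_eq_mul, (mem_cornerModule_iff he).1 z.2]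
  · rintro _ ⟨p, j, hj, rfl⟩
    rw [SetLike.mem_coe, LinearMap.mem_ker, map_smul, hsmul, (hker j).2 hj, mul_zero]

noncomputable def cornerModuleQuotEquiv (hsmul : ∀ (a : A) (b : B), op a • b = b * π a)
    (hker : ∀ x : A, π x = 0 ↔ x ∈ Ideal.jacobson (⊥ : Ideal A)) {e : A}
    (he : IsIdempotentElem e) :
    (cornerModule e ⧸ mulJacobson A (cornerModule e)) ≃ₗ[Aᵐᵒᵖ] span Aᵐᵒᵖ {π e} :=
  (quotEquivOfEq _ _ (ker_cornerReduction hsmul hker he).symm).trans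
    ((LinearMap.quotKerEquivRange _).trans (LinearEquiv.ofEq _ _ (range_cornerReduction hsmul e)))

theorem apply_eq_mul_of_isIdempotentElem (hsmul : ∀ (a : A) (b : B), op a • b = b * π a)
    {a : A} (ha : IsIdempotentElem (π a)) (f : span Aᵐᵒᵖ {π a} →ₗ[Aᵐᵒᵖ] B)
    (x : span Aᵐᵒᵖ {π a}) : f x = f ⟨π a, mem_span_singleton_self _⟩ * x := by
  set g : span Aᵐᵒᵖ {π a} := ⟨π a, mem_span_singleton_self _⟩
  have hg : f g * π a = f g := by
    rw [← hsmul, ← map_smul]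
    exact congrArg f (Subtype.ext (by rw [coe_smul, hsmul, ha.eq]))
  obtain ⟨r, hr⟩ := mem_span_singleton.1 x.2
  have hx : x = r • g := Subtype.ext hr.symm
  rw [hx, map_smul, coe_smul, smul_eq_mul_map_unop hsmul, smul_eq_mul_map_unop hsmul,
    ← mul_assoc, hg]

theorem exists_mul_eq_of_linearEquiv (hsmul : ∀ (a : A) (b : B), op a • b = b * π a)
    {a b : A} (ha : IsIdempotentElem (π a)) (hb : IsIdempotentElem (π b))
    (θ : span Aᵐᵒᵖ {π a} ≃ₗ[Aᵐᵒᵖ] span Aᵐᵒᵖ {π b}) :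
    ∃ u v : B, u * v = π b ∧ v * u = π a := by
  refine ⟨θ ⟨π a, mem_span_singleton_self _⟩, θ.symm ⟨π b, mem_span_singleton_self _⟩, ?_, ?_⟩
  · have := apply_eq_mul_of_isIdempotentElem hsmul ha
      ((span Aᵐᵒᵖ {π b}).subtype ∘ₗ θ.toLinearMap) (θ.symm ⟨π b, mem_span_singleton_self _⟩)
    simpa using this.symm
  · have := apply_eq_mul_of_isIdempotentElem hsmul hb
      ((span Aᵐᵒᵖ {π a}).subtype ∘ₗ θ.symm.toLinearMap) (θ ⟨π a, mem_span_singleton_self _⟩)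
    simpa using this.symm

end Reduction

/-- `1 + (c - e)` is a unit commuting with `e`, and `w = (1 + (c - e))⁻¹ e` inverts `c` in the
corner ring `eAe`. -/
theorem exists_corner_inverse {A : Type*} [Ring A] {e c : A} (he : IsIdempotentElem e)
    (hec : e * c = c) (hce : c * e = c) (hJ : c - e ∈ Ideal.jacobson (⊥ : Ideal A)) :
    ∃ w, e * w = w ∧ w * e = w ∧ w * c = e := by
  obtain ⟨t, ht⟩ := Ideal.isUnit_one_add_of_mem_jacobson_bot hJ
  have hte : c = t * e := by rw [ht, add_mul, sub_mul, one_mul, hce, he.eq]; abel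
  have het : Commute e t := by
    rw [Commute, SemiconjBy, ← hte, ht, mul_add, mul_sub, mul_one, hec, he.eq]; abel
  refine ⟨↑t⁻¹ * e, ?_, by rw [mul_assoc, he.eq], ?_⟩
  · rw [← mul_assoc, het.units_inv_right.eq, mul_assoc, he.eq]
  · rw [mul_assoc, hec, hte, ← mul_assoc, t.inv_mul, one_mul]

/-- The lift is `y w x`, where `x, y` lift `v, u` and `w` inverts `e x y e` in the corner ring
`eAe`. -/
theorem exists_isIdempotentElem_map_eq {A B : Type*} [Ring A] [Ring B] (π : A →+* B)
    (hsurj : Function.Surjective π) (hker : ∀ x : A, π x = 0 → x ∈ Ideal.jacobson (⊥ : Ideal A))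
    {e : A} (he : IsIdempotentElem e) {η u v : B} (hη : IsIdempotentElem η) (huv : u * v = η)
    (hvu : v * u = π e) : ∃ f : A, IsIdempotentElem f ∧ π f = η := by
  obtain ⟨x, rfl⟩ := hsurj v
  obtain ⟨y, rfl⟩ := hsurj u
  set c := e * x * y * e
  have hc : π c = π e := by
    simp only [c, map_mul]
    rw [mul_assoc (π e), hvu, (he.map π).eq, (he.map π).eq]
  obtain ⟨w, hew, hwe, hwc⟩ := exists_corner_inverse (c := c) he
    (by simp only [c, ← mul_assoc, he.eq]) (by simp only [c, mul_assoc, he.eq])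
    (hker _ (by rw [map_sub, hc, sub_self]))
  have hw : w * x * y * w = w := by
    calc w * x * y * w = w * c * w := by simp only [c, ← mul_assoc, hwe]; rw [mul_assoc _ e w, hew]
      _ = w := by rw [hwc, hew]
  have hπw : π w = π e := by
    calc π w = π (w * e) := by rw [hwe]
      _ = π (w * c) := by rw [map_mul, map_mul, hc]
      _ = π e := by rw [hwc]
  refine ⟨y * w * x, ?_, ?_⟩
  · calc y * w * x * (y * w * x) = y * (w * x * y * w) * x := by simp only [mul_assoc]
      _ = y * w * x := by rw [hw]
  · rw [map_mul, map_mul, hπw, ← hvu, ← hη.eq, ← huv]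
    simp only [mul_assoc]

theorem stmt_7_general {A B : Type u} [Ring A] [Ring B]
    (π : A →+* B) (hsurj : Function.Surjective π)
    (hker : ∀ x : A, π x = 0 ↔ x ∈ Ideal.jacobson (⊥ : Ideal A))
    [Module Aᵐᵒᵖ B] (hsmul : ∀ (a : A) (b : B), (op a) • b = b * π a)
    (η : B) (hη : η * η = η) :
    (∃ e : A, e * e = e ∧ π e = η) ↔
      ∃ (P : Type u) (_ : AddCommGroup P) (_ : Module Aᵐᵒᵖ P),
        Module.Finite Aᵐᵒᵖ P ∧ Module.Projective Aᵐᵒᵖ P ∧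
        Nonempty
          ((P ⧸ Submodule.span Aᵐᵒᵖ
              {z : P | ∃ (p : P) (j : A),
                j ∈ Ideal.jacobson (⊥ : Ideal A) ∧ z = op j • p}) ≃ₗ[Aᵐᵒᵖ]
            (Submodule.span Aᵐᵒᵖ ({η} : Set B))) := by
  constructor
  · rintro ⟨e, he, rfl⟩
    exact ⟨cornerModule e, _, _, inferInstance, cornerModule_projective he,
      ⟨cornerModuleQuotEquiv hsmul hker he⟩⟩
  · rintro ⟨P, _, _, _, _, ⟨ψ⟩⟩
    obtain ⟨q, hq⟩ := exists_span_singleton_sup_eq_top _ ψ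
    obtain ⟨e, he, ⟨E⟩⟩ := exists_linearEquiv_cornerModule (eq_top_of_sup_mulJacobson_eq_top hq)
    obtain ⟨a, rfl⟩ := hsurj η
    obtain ⟨u, v, huv, hvu⟩ := exists_mul_eq_of_linearEquiv hsmul (he.map π) hη
      ((cornerModuleQuotEquiv hsmul hker he).symm ≪≫ₗ
        (Quotient.equiv _ _ E (map_mulJacobson E)).symm ≪≫ₗ ψ)
    exact exists_isIdempotentElem_map_eq π hsurj (fun x => (hker x).1) he hη huv hvu

/-- Let `A` be a semilocal ring, i.e. `A` admits a surjective ring homomorphism `π` onto a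
semisimple ring `B` whose kernel is the Jacobson radical of `A` (so `B = A/Jac(A)`), and let
`η ∈ B` be an idempotent.  Then `η` lifts to an idempotent of `A` if and only if there is a
finitely generated projective right `A`-module `P` with `P/(P·Jac(A))` isomorphic to `ηB` as
right `A`-modules.  (Right `A`-modules are modelled as `Aᵐᵒᵖ`-modules; `B` is a right
`A`-module via `π`.) -/
theorem stmt_7 {A B : Type u} [Ring A] [Ring B] [IsSemisimpleRing B]
    (π : A →+* B) (hsurj : Function.Surjective π)
    (hker : ∀ x : A, π x = 0 ↔ x ∈ Ideal.jacobson (⊥ : Ideal A))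
    [Module Aᵐᵒᵖ B] (hsmul : ∀ (a : A) (b : B), (op a) • b = b * π a)
    (η : B) (hη : η * η = η) :
    (∃ e : A, e * e = e ∧ π e = η) ↔
      ∃ (P : Type u) (_ : AddCommGroup P) (_ : Module Aᵐᵒᵖ P),
        Module.Finite Aᵐᵒᵖ P ∧ Module.Projective Aᵐᵒᵖ P ∧
        Nonempty
          ((P ⧸ Submodule.span Aᵐᵒᵖ
              {z : P | ∃ (p : P) (j : A),
                j ∈ Ideal.jacobson (⊥ : Ideal A) ∧ z = op j • p}) ≃ₗ[Aᵐᵒᵖ]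
            (Submodule.span Aᵐᵒᵖ ({η} : Set B))) :=
  stmt_7_general π hsurj hker hsmul η hη
end

section
/- Let R be a commutative ring with 2 invertible, (A, σ) an R-algebra with involution possessing a central idempotent η with η^σ = 1 − η, and let (P, f) be a unimodular ε-hermitian space over (A, σ) (where ε ∈ Cent(A), ε^σ ε = 1). Then P = Pη ⊕ Pη^σ, f(Pη, Pη) = 0 = f(Pη^σ, Pη^σ), and consequently Pη is a Lagrangian of f, so (P, f) is hyperbolic. -/
open MulOpposite

/-- Let `(A, σ)` be an `R`-algebra with involution possessing a central idempotent `η` with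
`σ η = 1 - η`, and let `(P, f)` be a unimodular `ε`-hermitian space over `(A, σ)` (right
`A`-modules are modelled as `Aᵐᵒᵖ`-modules).  Then `P = Pη ⊕ P(σ η)`, both summands are
totally isotropic, and `Pη` is a Lagrangian of `f`; in particular `(P, f)` is hyperbolic. -/
theorem stmt_11 {R A P : Type*} [CommRing R] [Ring A] [Algebra R A]
    (h2 : IsUnit (2 : R))
    (σ : A → A)
    (hadd : ∀ x y, σ (x + y) = σ x + σ y)
    (hmulσ : ∀ x y, σ (x * y) = σ y * σ x)
    (hsmulσ : ∀ (r : R) (x : A), σ (r • x) = r • σ x)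
    (hone : σ 1 = 1) (hinvol : ∀ x, σ (σ x) = x)
    (η : A) (hη : η * η = η) (hηc : η ∈ Set.center A) (hexch : σ η = 1 - η)
    (ε : A) (hεc : ε ∈ Set.center A) (hε : σ ε * ε = 1)
    [AddCommGroup P] [Module Aᵐᵒᵖ P]
    [Module.Finite Aᵐᵒᵖ P] [Module.Projective Aᵐᵒᵖ P]
    (f : P → P → A)
    (haddl : ∀ x x' y, f (x + x') y = f x y + f x' y)
    (haddr : ∀ x y y', f x (y + y') = f x y + f x y')
    (hsesq₁ : ∀ (a : A) (x y : P), f (op a • x) y = σ a * f x y)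
    (hsesq₂ : ∀ (a : A) (x y : P), f x (op a • y) = f x y * a)
    (hherm : ∀ x y, f x y = ε * σ (f y x))
    (hunimod : ∀ g : P →ₗ[Aᵐᵒᵖ] A, ∃! x : P, ∀ y, f x y = g y) :
    let L : Submodule Aᵐᵒᵖ P := Submodule.span Aᵐᵒᵖ (Set.range fun p : P => op η • p)
    let M : Submodule Aᵐᵒᵖ P := Submodule.span Aᵐᵒᵖ (Set.range fun p : P => op (σ η) • p)
    IsCompl L M ∧
    (∀ x ∈ L, ∀ y ∈ L, f x y = 0) ∧
    (∀ x ∈ M, ∀ y ∈ M, f x y = 0) ∧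
    (∀ x : P, x ∈ L ↔ ∀ y ∈ L, f x y = 0) := by
  intro L M
  -- centrality of η
  have hc : ∀ b : A, η * b = b * η := fun b => (Set.mem_center_iff.mp hηc).comm b
  have hc' : ∀ b : A, (1 - η) * b = b * (1 - η) := by
    intro b; rw [sub_mul, mul_sub, one_mul, mul_one, hc]
  have hη' : (1 - η) * (1 - η) = 1 - η := by
    rw [mul_sub, mul_one, sub_mul, one_mul, hη, sub_self, sub_zero]
  have hση : σ (1 - η) = η := by rw [← hexch, hinvol]
  -- idempotence of smul by op η
  have hesmul : ∀ x : P, op η • (op η • x) = op η • x := by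
    intro x
    rw [← mul_smul, ← op_mul, hη]
  have hesmul' : ∀ x : P, op (1 - η) • (op (1 - η) • x) = op (1 - η) • x := by
    intro x
    rw [← mul_smul, ← op_mul, hη']
  -- membership characterizations
  have hmemL : ∀ x : P, x ∈ L ↔ op η • x = x := by
    intro x
    constructor
    · intro hx
      induction hx using Submodule.span_induction with
      | mem z hz => obtain ⟨p, rfl⟩ := hz; exact hesmul p
      | zero => simp
      | add a b _ _ ha hb => rw [smul_add, ha, hb]
      | smul a z _ hz =>
        induction a using MulOpposite.rec' with
        | h b =>
          rw [← mul_smul, ← op_mul, ← hc, op_mul, mul_smul, hz]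
    · intro hx
      exact Submodule.subset_span ⟨x, hx⟩
  have hmemM : ∀ x : P, x ∈ M ↔ op (1 - η) • x = x := by
    intro x
    constructor
    · intro hxM
      have hx : x ∈ Submodule.span Aᵐᵒᵖ (Set.range fun p : P => op (1 - η) • p) := by
        rw [← hexch]; exact hxM
      clear hxM
      induction hx using Submodule.span_induction with
      | mem z hz => obtain ⟨p, rfl⟩ := hz; exact hesmul' p
      | zero => simp
      | add a b _ _ ha hb => rw [smul_add, ha, hb]
      | smul a z _ hz =>
        induction a using MulOpposite.rec' with
        | h b =>
          rw [← mul_smul, ← op_mul, ← hc', op_mul, mul_smul, hz]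
    · intro hx
      rw [show M = Submodule.span Aᵐᵒᵖ (Set.range fun p : P => op (σ η) • p) from rfl]
      rw [hexch]
      exact Submodule.subset_span ⟨x, hx⟩
  -- f vanishes on L × L
  have hLL : ∀ x ∈ L, ∀ y ∈ L, f x y = 0 := by
    intro x hx y hy
    rw [hmemL] at hx hy
    calc f x y = f (op η • x) (op η • y) := by rw [hx, hy]
    _ = (σ η) * (f x y * η) := by rw [hsesq₂, hsesq₁, mul_assoc]
    _ = ((1 - η) * η) * f x y := by rw [hexch, ← hc, mul_assoc]
    _ = 0 := by rw [sub_mul, one_mul, hη, sub_self, zero_mul]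
  have hMM : ∀ x ∈ M, ∀ y ∈ M, f x y = 0 := by
    intro x hx y hy
    rw [hmemM] at hx hy
    calc f x y = f (op (1 - η) • x) (op (1 - η) • y) := by rw [hx, hy]
    _ = (σ (1 - η)) * (f x y * (1 - η)) := by rw [hsesq₂, hsesq₁, mul_assoc]
    _ = (η * (1 - η)) * f x y := by rw [hση, ← hc', mul_assoc]
    _ = 0 := by rw [mul_sub, mul_one, hη, sub_self, zero_mul]
  have hf0 : ∀ y, f 0 y = 0 := by
    intro y
    have := haddl 0 0 y
    rw [add_zero] at this
    exact (left_eq_add.mp this)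
  refine ⟨⟨?_, ?_⟩, hLL, hMM, ?_⟩
  · -- disjoint
    rw [Submodule.disjoint_def]
    intro x hxL hxM
    rw [hmemL] at hxL
    rw [hmemM] at hxM
    have h0 : op η • x = 0 := by
      conv_lhs => rw [← hxM]
      rw [← mul_smul, ← op_mul]
      have hz : (1 - η) * η = 0 := by rw [sub_mul, one_mul, hη, sub_self]
      rw [hz, op_zero, zero_smul]
    rw [← hxL, h0]
  · -- codisjoint
    rw [codisjoint_iff_le_sup]
    intro x _
    have : x = op η • x + op (1 - η) • x := by
      rw [op_sub, op_one, sub_smul, one_smul]; abel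
    rw [this]
    exact Submodule.add_mem_sup ((hmemL _).mpr (hesmul x)) ((hmemM _).mpr (hesmul' x))
  · -- L = L^⊥
    intro x
    constructor
    · intro hx y hy; exact hLL x hx y hy
    · intro hx
      -- show op (1-η) • x = 0
      have key : ∀ z : P, f (op (1 - η) • x) z = 0 := by
        intro z
        rw [hsesq₁, hση, hc, ← hsesq₂]
        exact hx (op η • z) ((hmemL _).mpr (hesmul z))
      obtain ⟨x₀, _, huniq⟩ := hunimod 0
      have h1 : op (1 - η) • x = x₀ := huniq _ (by simpa using key)
      have h2 : (0 : P) = x₀ := huniq _ (by simpa using hf0)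
      have hz : op (1 - η) • x = 0 := by rw [h1, ← h2]
      rw [hmemL]
      have : x = op η • x + op (1 - η) • x := by
        rw [op_sub, op_one, sub_smul, one_smul]; abel
      rw [hz, add_zero] at this
      exact this.symm
end

section
/- Let (A, σ) be a ring with involution with 2 invertible, ε central with ε^σ ε = 1, and let e ∈ A be an idempotent with e^σ = e and AeA = A. For a unimodular ε-hermitian space (P, f) over (A, σ), the restriction f_e := f|_{Pe × Pe} is a unimodular eε-hermitian form over (eAe, σ|_{eAe}), and the map L ↦ Le is a bijection between Lagrangians of f and Lagrangians of f_e. In particular, f is hyperbolic if and only if f_e is hyperbolic. -/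
open MulOpposite

section TransferDefs

variable {A P : Type*} [Ring A] [AddCommGroup P] [Module Aᵐᵒᵖ P]

/-- A Lagrangian of a hermitian form `f` on the right `A`-module `P`: a direct summand `L`
with `L = L^⊥`. -/
def IsLagrangian (f : P → P → A) (L : Submodule Aᵐᵒᵖ P) : Prop :=
  (∃ L', IsCompl L L') ∧ ∀ x : P, x ∈ L ↔ ∀ y ∈ L, f x y = 0

/-- A subset `S` of `Pe` which is a right `eAe`-submodule of `Pe`. -/
def IsSubmoduleE (e : A) (S : Set P) : Prop :=
  (∀ x ∈ S, op e • x = x) ∧ (0 : P) ∈ S ∧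
  (∀ x ∈ S, ∀ y ∈ S, x + y ∈ S) ∧ (∀ x ∈ S, -x ∈ S) ∧
  ∀ x ∈ S, ∀ a : A, op (e * a * e) • x ∈ S

/-- A Lagrangian of the transferred form `f_e` on the right `eAe`-module `Pe`:
an `eAe`-submodule of `Pe` which is a direct summand of `Pe` and equals its own
orthogonal complement in `Pe`. -/
def IsLagrangianE (e : A) (f : P → P → A) (S : Set P) : Prop :=
  IsSubmoduleE e S ∧
  (∃ T : Set P, IsSubmoduleE e T ∧ (∀ x, x ∈ S → x ∈ T → x = 0) ∧
    ∀ x : P, op e • x = x → ∃ s ∈ S, ∃ t ∈ T, x = s + t) ∧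
  ∀ x : P, op e • x = x → (x ∈ S ↔ ∀ y ∈ S, f x y = 0)

end TransferDefs

/-- Transfer along a full symmetric idempotent.  Let `(A, σ)` be a ring with involution
with `2` invertible, `ε` central with `σ ε * ε = 1`, and `e` an idempotent with `σ e = e`
and `AeA = A`.  For a unimodular `ε`-hermitian space `(P, f)` over `(A, σ)` (right
`A`-modules modelled as `Aᵐᵒᵖ`-modules), the restriction `f_e` of `f` to `Pe × Pe` is a
unimodular `eε`-hermitian form over `(eAe, σ|_{eAe})`, the map `L ↦ Le` is a bijection
between Lagrangians of `f` and Lagrangians of `f_e`, and `f` is hyperbolic if and only if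
`f_e` is hyperbolic. -/
theorem stmt_13 {A P : Type*} [Ring A] [Invertible (2 : A)]
    (σ : A → A)
    (hadd : ∀ x y, σ (x + y) = σ x + σ y)
    (hmulσ : ∀ x y, σ (x * y) = σ y * σ x)
    (hone : σ 1 = 1) (hinvol : ∀ x, σ (σ x) = x)
    (ε : A) (hεc : ε ∈ Set.center A) (hε : σ ε * ε = 1)
    (e : A) (he : e * e = e) (heσ : σ e = e)
    (hfull : ∃ (n : ℕ) (x y : Fin n → A), ∑ i, x i * e * y i = 1)
    [AddCommGroup P] [Module Aᵐᵒᵖ P]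
    [Module.Finite Aᵐᵒᵖ P] [Module.Projective Aᵐᵒᵖ P]
    (f : P → P → A)
    (haddl : ∀ x x' y, f (x + x') y = f x y + f x' y)
    (haddr : ∀ x y y', f x (y + y') = f x y + f x y')
    (hsesq₁ : ∀ (a : A) (x y : P), f (op a • x) y = σ a * f x y)
    (hsesq₂ : ∀ (a : A) (x y : P), f x (op a • y) = f x y * a)
    (hherm : ∀ x y, f x y = ε * σ (f y x))
    (hunimod : ∀ g : P →ₗ[Aᵐᵒᵖ] A, ∃! x : P, ∀ y, f x y = g y) :
    -- `f_e` takes values in `eAe`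
    (∀ x y : P, op e • x = x → op e • y = y → e * f x y * e = f x y) ∧
    -- `f_e` is `eε`-hermitian over `(eAe, σ|_{eAe})`
    (∀ x y : P, op e • x = x → op e • y = y → f x y = (e * ε) * σ (f y x)) ∧
    -- `f_e` is unimodular: every `eAe`-linear functional on `Pe` is uniquely represented
    (∀ φ : P → A,
      (∀ y z : P, op e • y = y → op e • z = z → φ (y + z) = φ y + φ z) →
      (∀ (y : P) (a : A), op e • y = y → φ (op (e * a * e) • y) = φ y * (e * a * e)) →
      (∀ y : P, op e • y = y → e * φ y * e = φ y) →
      ∃! x : P, op e • x = x ∧ ∀ y : P, op e • y = y → f x y = φ y) ∧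
    -- `L ↦ Le` maps Lagrangians of `f` to Lagrangians of `f_e`
    (∀ L : Submodule Aᵐᵒᵖ P, IsLagrangian f L →
      IsLagrangianE e f ((fun x : P => op e • x) '' (L : Set P))) ∧
    -- `L ↦ Le` is injective on Lagrangians of `f`
    (∀ L L' : Submodule Aᵐᵒᵖ P, IsLagrangian f L → IsLagrangian f L' →
      (fun x : P => op e • x) '' (L : Set P) = (fun x : P => op e • x) '' (L' : Set P) →
      L = L') ∧
    -- `L ↦ Le` is surjective onto Lagrangians of `f_e`
    (∀ S : Set P, IsLagrangianE e f S →
      ∃ L : Submodule Aᵐᵒᵖ P, IsLagrangian f L ∧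
        (fun x : P => op e • x) '' (L : Set P) = S) ∧
    -- `f` is hyperbolic iff `f_e` is hyperbolic
    ((∃ L M : Submodule Aᵐᵒᵖ P, IsLagrangian f L ∧ IsLagrangian f M ∧ IsCompl L M) ↔
      ∃ S T : Set P, IsLagrangianE e f S ∧ IsLagrangianE e f T ∧
        (∀ x, x ∈ S → x ∈ T → x = 0) ∧
        ∀ x : P, op e • x = x → ∃ s ∈ S, ∃ t ∈ T, x = s + t) := by
  obtain ⟨n, xs, ys, hsum⟩ := hfull
  have hsm : ∀ (a b : A) (x : P), op a • (op b • x) = op (b * a) • x := by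
    intro a b x; rw [smul_smul, ← op_mul]
  have hPe : ∀ (a : A) (p : P), op e • (op (a * e) • p) = op (a * e) • p := by
    intro a p; rw [hsm e (a * e) p, mul_assoc a e e, he]
  have hPeE : ∀ (c : A) (z : P), op e • (op (e * c * e) • z) = op (e * c * e) • z := by
    intro c z; rw [hsm e (e * c * e) z, mul_assoc (e * c) e e, he]
  have hσsum : ∀ (m : ℕ) (g : Fin m → A), σ (∑ i, g i) = ∑ i, σ (g i) := by
    intro m g
    exact map_sum (AddMonoidHom.mk' σ hadd) g Finset.univ
  have hf0r : ∀ x : P, f x 0 = 0 := fun x => (AddMonoidHom.mk' (f x) (haddr x)).map_zero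
  have hf0l : ∀ y : P, f 0 y = 0 := fun y =>
    (AddMonoidHom.mk' (fun x => f x y) (fun a b => haddl a b y)).map_zero
  have hfsumr : ∀ (x : P) (m : ℕ) (g : Fin m → P), f x (∑ i, g i) = ∑ i, f x (g i) := by
    intro x m g
    exact map_sum (AddMonoidHom.mk' (f x) (haddr x)) g Finset.univ
  have hdecomp : ∀ (zs ws : Fin n → A), (∑ i, zs i * e * ws i) = 1 → ∀ p : P,
      p = ∑ i, op (ws i) • (op (zs i * e) • p) := by
    intro zs ws h1 p
    have h2 : (op (∑ i, zs i * e * ws i) : Aᵐᵒᵖ) • p = p := by rw [h1, op_one, one_smul]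
    conv_lhs => rw [← h2]
    rw [Finset.op_sum, Finset.sum_smul]
    exact Finset.sum_congr rfl fun i _ => (hsm (ws i) (zs i * e) p).symm
  have hcomm : ∀ b : A, ε * b = b * ε := fun b => (Set.mem_center_iff.mp hεc).comm b
  -- Part 1
  have part1 : ∀ x y : P, op e • x = x → op e • y = y → e * f x y * e = f x y := by
    intro x y hx hy
    conv_rhs => rw [← hx, ← hy, hsesq₁, hsesq₂, heσ]
    rw [mul_assoc]
  -- Part 2
  have part2 : ∀ x y : P, op e • x = x → op e • y = y → f x y = (e * ε) * σ (f y x) := by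
    intro x y hx hy
    have h1 : σ (f y x) = e * σ (f y x) * e := by
      conv_lhs => rw [← part1 y x hy hx]
      rw [hmulσ, hmulσ, heσ, mul_assoc]
    have h2 : e * σ (f y x) = σ (f y x) := by
      conv_lhs => rw [h1]
      conv_rhs => rw [h1]
      rw [← mul_assoc, ← mul_assoc, he]
    calc f x y = ε * σ (f y x) := hherm x y
      _ = ε * (e * σ (f y x)) := by rw [h2]
      _ = ε * e * σ (f y x) := by rw [mul_assoc]
      _ = (e * ε) * σ (f y x) := by rw [hcomm e]
  -- Part 3
  have part3 : ∀ φ : P → A,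
      (∀ y z : P, op e • y = y → op e • z = z → φ (y + z) = φ y + φ z) →
      (∀ (y : P) (a : A), op e • y = y → φ (op (e * a * e) • y) = φ y * (e * a * e)) →
      (∀ y : P, op e • y = y → e * φ y * e = φ y) →
      ∃! x : P, op e • x = x ∧ ∀ y : P, op e • y = y → f x y = φ y := by
    intro φ hφadd hφlin hφval
    set us : Fin n → A := fun i => σ (ys i) with hus
    set vs : Fin n → A := fun i => σ (xs i) with hvs
    have hsum2 : ∑ i, us i * e * vs i = 1 := by
      have h := congrArg σ hsum
      rw [hone, hσsum] at h
      rw [← h]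
      refine Finset.sum_congr rfl fun i _ => ?_
      rw [hmulσ (xs i * e) (ys i), hmulσ (xs i) e, heσ, ← mul_assoc]
    have hφ0 : φ 0 = 0 := by
      have h := hφadd 0 0 (smul_zero _) (smul_zero _)
      rw [add_zero] at h
      exact (left_eq_add.mp h)
    have hφer : ∀ y : P, op e • y = y → φ y * e = φ y := by
      intro y hy
      conv_lhs => rw [← hφval y hy]
      rw [mul_assoc (e * φ y) e e, he]
      exact hφval y hy
    have hφel : ∀ y : P, op e • y = y → e * φ y = φ y := by
      intro y hy
      conv_lhs => rw [← hφval y hy]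
      simp only [← mul_assoc, he]
      exact hφval y hy
    have hφsum : ∀ (m : ℕ) (g : Fin m → P), (∀ i, op e • g i = g i) →
        φ (∑ i, g i) = ∑ i, φ (g i) := by
      intro m g hg
      have key : ∀ s : Finset (Fin m),
          op e • (∑ i ∈ s, g i) = ∑ i ∈ s, g i ∧ φ (∑ i ∈ s, g i) = ∑ i ∈ s, φ (g i) := by
        intro s
        induction s using Finset.induction with
        | empty => simp [hφ0]
        | @insert a s ha ih =>
          rw [Finset.sum_insert ha, Finset.sum_insert ha]
          exact ⟨by rw [smul_add, hg a, ih.1],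
            by rw [hφadd _ _ (hg a) ih.1, ih.2]⟩
      exact (key Finset.univ).2
    have hgadd : ∀ y z : P, (∑ i, φ (op (us i * e) • (y + z)) * vs i) =
        (∑ i, φ (op (us i * e) • y) * vs i) + ∑ i, φ (op (us i * e) • z) * vs i := by
      intro y z
      rw [← Finset.sum_add_distrib]
      refine Finset.sum_congr rfl fun i _ => ?_
      rw [smul_add, hφadd _ _ (hPe (us i) y) (hPe (us i) z), add_mul]
    have hgsmul : ∀ (a : A) (y : P), (∑ i, φ (op (us i * e) • (op a • y)) * vs i) =
        (∑ i, φ (op (us i * e) • y) * vs i) * a := by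
      intro a y
      have hstep : ∀ i, φ (op (us i * e) • (op a • y))
          = ∑ j, φ (op (us j * e) • y) * (e * (vs j * a * us i) * e) := by
        intro i
        have h2 : ∀ j, us j * e * vs j * (a * (us i * e)) =
            us j * e * (e * (vs j * a * us i) * e) := by
          intro j
          simp only [mul_assoc]
          rw [← mul_assoc e e, he]
        have h3 : a * (us i * e) = ∑ j, us j * e * (e * (vs j * a * us i) * e) := by
          calc a * (us i * e) = (∑ j, us j * e * vs j) * (a * (us i * e)) := by
                rw [hsum2, one_mul]
            _ = ∑ j, us j * e * vs j * (a * (us i * e)) := Finset.sum_mul _ _ _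
            _ = ∑ j, us j * e * (e * (vs j * a * us i) * e) :=
                Finset.sum_congr rfl fun j _ => h2 j
        have h4 : op (us i * e) • (op a • y) =
            ∑ j, op (e * (vs j * a * us i) * e) • (op (us j * e) • y) := by
          rw [hsm (us i * e) a y, h3, Finset.op_sum, Finset.sum_smul]
          exact Finset.sum_congr rfl fun j _ =>
            (hsm (e * (vs j * a * us i) * e) (us j * e) y).symm
        rw [h4, hφsum n _ (fun j => hPeE _ _)]
        exact Finset.sum_congr rfl fun j _ => hφlin _ _ (hPe (us j) y)
      calc (∑ i, φ (op (us i * e) • (op a • y)) * vs i)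
          = ∑ i, (∑ j, φ (op (us j * e) • y) * (e * (vs j * a * us i) * e)) * vs i :=
            Finset.sum_congr rfl fun i _ => by rw [hstep i]
        _ = ∑ i, ∑ j, φ (op (us j * e) • y) * (e * (vs j * a * us i) * e) * vs i :=
            Finset.sum_congr rfl fun i _ => Finset.sum_mul _ _ _
        _ = ∑ j, ∑ i, φ (op (us j * e) • y) * (e * (vs j * a * us i) * e) * vs i :=
            Finset.sum_comm
        _ = ∑ j, ∑ i, φ (op (us j * e) • y) * e * (vs j * a) * (us i * e * vs i) := by
            refine Finset.sum_congr rfl fun j _ => Finset.sum_congr rfl fun i _ => ?_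
            simp only [mul_assoc]
        _ = ∑ j, φ (op (us j * e) • y) * e * (vs j * a) * 1 := by
            refine Finset.sum_congr rfl fun j _ => ?_
            rw [← Finset.mul_sum, hsum2]
        _ = ∑ j, φ (op (us j * e) • y) * vs j * a := by
            refine Finset.sum_congr rfl fun j _ => ?_
            rw [mul_one, hφer _ (hPe (us j) y), ← mul_assoc]
        _ = (∑ i, φ (op (us i * e) • y) * vs i) * a := (Finset.sum_mul _ _ _).symm
    let G : P →ₗ[Aᵐᵒᵖ] A :=
      { toFun := fun y => ∑ i, φ (op (us i * e) • y) * vs i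
        map_add' := hgadd
        map_smul' := fun c y => by
          have h := hgsmul c.unop y
          rw [op_unop] at h
          simpa [MulOpposite.smul_eq_mul_unop] using h }
    have hGy : ∀ y : P, G y = ∑ i, φ (op (us i * e) • y) * vs i := fun y => rfl
    obtain ⟨x, hx, hxuniq⟩ := hunimod G
    have hge : ∀ y : P, e * (∑ i, φ (op (us i * e) • y) * vs i) =
        ∑ i, φ (op (us i * e) • y) * vs i := by
      intro y
      rw [Finset.mul_sum]
      refine Finset.sum_congr rfl fun i _ => ?_
      rw [← mul_assoc, hφel _ (hPe (us i) y)]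
    have hxe : op e • x = x := by
      apply hxuniq
      intro y
      rw [hsesq₁, heσ, hx y, hGy, hge]
    have hrepr : ∀ y : P, op e • y = y → f x y = φ y := by
      intro y hy
      have h1 : f x y = (∑ i, φ (op (us i * e) • y) * vs i) * e := by
        conv_lhs => rw [← hy]
        rw [hsesq₂, hx y, hGy]
      have h5 : ∀ i, op (us i * e) • y = op (e * us i * e) • y := by
        intro i
        conv_lhs => rw [← hy, hsm (us i * e) e y]
        rw [← mul_assoc]
      rw [h1, Finset.sum_mul]
      calc ∑ i, φ (op (us i * e) • y) * vs i * e
          = ∑ i, φ y * (us i * e * vs i) * e := by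
            refine Finset.sum_congr rfl fun i _ => ?_
            rw [h5 i, hφlin y (us i) hy]
            simp only [← mul_assoc, hφer y hy]
        _ = φ y := by rw [← Finset.sum_mul, ← Finset.mul_sum, hsum2, mul_one, hφer y hy]
    refine ⟨x, ⟨hxe, hrepr⟩, ?_⟩
    rintro x' ⟨hx'e, hx'r⟩
    apply hxuniq
    intro y
    rw [hGy]
    conv_lhs => rw [hdecomp us vs hsum2 y]
    rw [hfsumr]
    refine Finset.sum_congr rfl fun i _ => ?_
    rw [hsesq₂, hx'r _ (hPe (us i) y)]
  -- images of submodules are `eAe`-submodules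
  have hsubE : ∀ N : Submodule Aᵐᵒᵖ P, IsSubmoduleE e ((fun x : P => op e • x) '' (N : Set P)) := by
    intro N
    refine ⟨?_, ⟨0, N.zero_mem, smul_zero _⟩, ?_, ?_, ?_⟩
    · rintro x ⟨l, hl, rfl⟩
      rw [hsm e e, he]
    · rintro x ⟨l, hl, rfl⟩ y ⟨m, hm, rfl⟩
      exact ⟨l + m, N.add_mem hl hm, smul_add _ _ _⟩
    · rintro x ⟨l, hl, rfl⟩
      exact ⟨-l, N.neg_mem hl, smul_neg _ _⟩
    · rintro x ⟨l, hl, rfl⟩ a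
      refine ⟨op (e * a) • l, N.smul_mem _ hl, ?_⟩
      show op e • (op (e * a) • l) = op (e * a * e) • (op e • l)
      rw [hsm e (e * a) l, hsm (e * a * e) e l]
      congr 1
      conv_rhs => rw [← mul_assoc, ← mul_assoc, he]
  -- part 4 : images of Lagrangians are Lagrangians of `f_e`
  have hmapsto : ∀ L : Submodule Aᵐᵒᵖ P, IsLagrangian f L →
      IsLagrangianE e f ((fun x : P => op e • x) '' (L : Set P)) := by
    rintro L ⟨⟨L', hc⟩, hLorth⟩
    refine ⟨hsubE L, ⟨(fun x : P => op e • x) '' (L' : Set P), hsubE L', ?_, ?_⟩, ?_⟩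
    · rintro x ⟨l, hl, rfl⟩ ⟨m, hm, hml⟩
      exact Submodule.disjoint_def.mp hc.disjoint _ (L.smul_mem _ hl)
        (hml ▸ L'.smul_mem (op e) hm)
    · intro x hx
      have hxt : x ∈ L ⊔ L' := by rw [hc.sup_eq_top]; trivial
      obtain ⟨l, hl, m, hm, rfl⟩ := Submodule.mem_sup.mp hxt
      exact ⟨op e • l, ⟨l, hl, rfl⟩, op e • m, ⟨m, hm, rfl⟩, by rw [← smul_add]; exact hx.symm⟩
    · intro x hx
      constructor
      · rintro ⟨l, hl, rfl⟩ y ⟨m, hm, rfl⟩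
        rw [hsesq₁, hsesq₂, (hLorth l).mp hl m hm, zero_mul, mul_zero]
      · intro hperp
        have hxL : x ∈ L := by
          rw [hLorth]
          intro m hm
          conv_lhs => rw [hdecomp xs ys hsum m]
          rw [hfsumr]
          refine Finset.sum_eq_zero fun i _ => ?_
          rw [hsesq₂, hperp _ ⟨op (xs i) • m, L.smul_mem _ hm, hsm e (xs i) m⟩, zero_mul]
        exact ⟨x, hxL, hx⟩
  -- injectivity helper
  have hsubset : ∀ L L' : Submodule Aᵐᵒᵖ P,
      ((fun x : P => op e • x) '' (L : Set P) ⊆ (fun x : P => op e • x) '' (L' : Set P)) →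
      L ≤ L' := by
    intro L L' h l hl
    rw [hdecomp xs ys hsum l]
    refine Submodule.sum_mem _ fun i _ => Submodule.smul_mem _ _ ?_
    obtain ⟨m, hm, heq⟩ := h ⟨op (xs i) • l, L.smul_mem _ hl, hsm e (xs i) l⟩
    rw [← heq]
    exact L'.smul_mem _ hm
  -- span infrastructure
  have hclaimA : ∀ S : Set P, IsSubmoduleE e S →
      ∀ x ∈ Submodule.span Aᵐᵒᵖ S, ∀ a : A, op (a * e) • x ∈ S := by
    intro S hS x hx
    induction hx using Submodule.span_induction with
    | mem s hs =>
      intro a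
      have h1 : op (a * e) • s = op (e * a * e) • s := by
        conv_lhs => rw [← hS.1 s hs, hsm (a * e) e s]
        rw [← mul_assoc]
      rw [h1]
      exact hS.2.2.2.2 s hs a
    | zero => intro a; rw [smul_zero]; exact hS.2.1
    | add x y hx hy ihx ihy =>
      intro a; rw [smul_add]; exact hS.2.2.1 _ (ihx a) _ (ihy a)
    | smul c x hx ih =>
      intro a
      rw [← op_unop c, hsm (a * e) c.unop x, ← mul_assoc]
      exact ih (c.unop * a)
  have hspan_orth : ∀ S : Set P, IsSubmoduleE e S →
      (∀ x : P, op e • x = x → (x ∈ S ↔ ∀ y ∈ S, f x y = 0)) →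
      ∀ x : P, x ∈ Submodule.span Aᵐᵒᵖ S ↔ ∀ y ∈ Submodule.span Aᵐᵒᵖ S, f x y = 0 := by
    intro S hS horth x
    have step1 : ∀ x : P, (∀ s ∈ S, f x s = 0) → ∀ y ∈ Submodule.span Aᵐᵒᵖ S, f x y = 0 := by
      intro x hx y hy
      induction hy using Submodule.span_induction with
      | mem s hs => exact hx s hs
      | zero => exact hf0r x
      | add y z hy hz ihy ihz => rw [haddr, ihy, ihz, add_zero]
      | smul c y hy ih => rw [← op_unop c, hsesq₂, ih, zero_mul]
    constructor
    · intro hx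
      have hxs : ∀ s ∈ S, f x s = 0 := by
        induction hx using Submodule.span_induction with
        | mem t ht => exact (horth t (hS.1 t ht)).mp ht
        | zero => intro s hs; exact hf0l s
        | add y z hy hz ihy ihz => intro s hs; rw [haddl, ihy s hs, ihz s hs, add_zero]
        | smul c y hy ih => intro s hs; rw [← op_unop c, hsesq₁, ih s hs, mul_zero]
      exact step1 x hxs
    · intro hx
      have hx' : ∀ s ∈ S, f x s = 0 := fun s hs => hx s (Submodule.subset_span hs)
      rw [hdecomp xs ys hsum x]
      refine Submodule.sum_mem _ fun i _ => Submodule.smul_mem _ _ ?_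
      refine Submodule.subset_span ((horth _ (hPe (xs i) x)).mpr fun s hs => ?_)
      rw [hsesq₁, hx' s hs, mul_zero]
  have hkey : ∀ S T : Set P, IsSubmoduleE e S → IsSubmoduleE e T →
      (∀ x, x ∈ S → x ∈ T → x = 0) →
      (∀ x : P, op e • x = x → ∃ s ∈ S, ∃ t ∈ T, x = s + t) →
      IsCompl (Submodule.span Aᵐᵒᵖ S) (Submodule.span Aᵐᵒᵖ T) := by
    intro S T hS hT hdisj hspan
    constructor
    · rw [Submodule.disjoint_def]
      intro x hxS hxT
      rw [hdecomp xs ys hsum x]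
      refine Finset.sum_eq_zero fun i _ => ?_
      rw [hdisj _ (hclaimA S hS x hxS (xs i)) (hclaimA T hT x hxT (xs i)), smul_zero]
    · rw [codisjoint_iff, eq_top_iff]
      intro p _
      rw [hdecomp xs ys hsum p]
      refine Submodule.sum_mem _ fun i _ => ?_
      obtain ⟨s, hs, t, ht, hst⟩ := hspan _ (hPe (xs i) p)
      rw [hst, smul_add]
      exact Submodule.add_mem _
        (Submodule.mem_sup_left (Submodule.smul_mem _ _ (Submodule.subset_span hs)))
        (Submodule.mem_sup_right (Submodule.smul_mem _ _ (Submodule.subset_span ht)))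
  have himg : ∀ S : Set P, IsSubmoduleE e S →
      (fun x : P => op e • x) '' ((Submodule.span Aᵐᵒᵖ S : Submodule Aᵐᵒᵖ P) : Set P) = S := by
    intro S hS
    apply Set.Subset.antisymm
    · rintro _ ⟨x, hx, rfl⟩
      have h := hclaimA S hS x hx 1
      rwa [one_mul] at h
    · intro s hs
      exact ⟨s, Submodule.subset_span hs, hS.1 s hs⟩
  have hsurj : ∀ S : Set P, IsLagrangianE e f S →
      ∃ L : Submodule Aᵐᵒᵖ P, IsLagrangian f L ∧
        (fun x : P => op e • x) '' (L : Set P) = S := by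
    rintro S ⟨hS, ⟨T, hT, hdisj, hsp⟩, horth⟩
    exact ⟨Submodule.span Aᵐᵒᵖ S,
      ⟨⟨Submodule.span Aᵐᵒᵖ T, hkey S T hS hT hdisj hsp⟩, hspan_orth S hS horth⟩, himg S hS⟩
  refine ⟨part1, part2, part3, hmapsto, ?_, hsurj, ?_⟩
  · intro L L' hL hL' hEq
    exact le_antisymm (hsubset L L' hEq.subset) (hsubset L' L hEq.symm.subset)
  · constructor
    · rintro ⟨L, M, hL, hM, hc⟩
      refine ⟨_, _, hmapsto L hL, hmapsto M hM, ?_, ?_⟩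
      · rintro x ⟨l, hl, rfl⟩ ⟨m, hm, hml⟩
        exact Submodule.disjoint_def.mp hc.disjoint _ (L.smul_mem _ hl)
          (hml ▸ M.smul_mem (op e) hm)
      · intro x hx
        have hxt : x ∈ L ⊔ M := by rw [hc.sup_eq_top]; trivial
        obtain ⟨l, hl, m, hm, rfl⟩ := Submodule.mem_sup.mp hxt
        exact ⟨op e • l, ⟨l, hl, rfl⟩, op e • m, ⟨m, hm, rfl⟩,
          by rw [← smul_add]; exact hx.symm⟩
    · rintro ⟨S, T, hS, hT, hdisj, hsp⟩
      obtain ⟨T', hT', hdisj', hsp'⟩ := hT.2.1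
      exact ⟨Submodule.span Aᵐᵒᵖ S, Submodule.span Aᵐᵒᵖ T,
        ⟨⟨_, hkey S T hS.1 hT.1 hdisj hsp⟩, hspan_orth S hS.1 hS.2.2⟩,
        ⟨⟨_, hkey T T' hT.1 hT' hdisj' hsp'⟩, hspan_orth T hT.1 hT.2.2⟩,
        hkey S T hS.1 hT.1 hdisj hsp⟩
end

section
/- Let R be a semilocal commutative ring with 2 invertible, (A, σ) an R-algebra with involution such that A is finite over R, and ε ∈ Cent(A) with ε^σ ε = 1. Suppose that for every maximal ideal m of R there exists an element a_m ∈ A(m) := A ⊗_R k(m) with ε a_m^σ = a_m and a_m invertible in A(m). Then there exists a ∈ A with ε a^σ = a and a ∈ A×. -/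
/-!
Lift the given elements `a_m` to a single `b ∈ A` by the Chinese remainder theorem (there are
only finitely many maximal ideals) and replace `b` by `½ (b + ε σ b)`: this is `ε`-symmetric and
still reduces to `a_m`, because `a_m` is. Invertibility is detected on the fibres: left
multiplication by an element that is a unit in every `A(m)` is surjective modulo every maximal
ideal, hence surjective by Nakayama, hence bijective because `A` is a finite module over a
commutative ring (Vasconcelos).
-/

open TensorProduct Function

section Fibre

variable {R M : Type*} [CommRing R] [AddCommGroup M] [Module R M]

theorem exists_one_tmul_eq (I : Ideal R) (t : (R ⧸ I) ⊗[R] M) :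
    ∃ x : M, (1 : R ⧸ I) ⊗ₜ[R] x = t := by
  obtain ⟨x, hx⟩ := Submodule.Quotient.mk_surjective _ (quotTensorEquivQuotSMul M I t)
  exact ⟨x, by rw [← quotTensorEquivQuotSMul_symm_mk, hx, LinearEquiv.symm_apply_apply]⟩

theorem sub_mem_smul_top_of_one_tmul_eq {I : Ideal R} {x y : M}
    (h : (1 : R ⧸ I) ⊗ₜ[R] x = (1 : R ⧸ I) ⊗ₜ[R] y) : x - y ∈ I • (⊤ : Submodule R M) := by
  have := congrArg (quotTensorEquivQuotSMul M I) h
  rwa [quotTensorEquivQuotSMul_mk_one_tmul, quotTensorEquivQuotSMul_mk_one_tmul,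
    Submodule.Quotient.eq] at this

theorem Submodule.eq_top_of_forall_isMaximal_le_sup_smul_top [Module.Finite R M]
    (N : Submodule R M) (hN : ∀ m : Ideal R, m.IsMaximal → ⊤ ≤ N ⊔ m • ⊤) : N = ⊤ := by
  suffices N.colon (⊤ : Submodule R M) = ⊤ by
    rwa [colon_eq_top_iff_subset, SetLike.coe_subset_coe, top_le_iff] at this
  by_contra hne
  obtain ⟨m, hm, hle⟩ := Ideal.exists_le_maximal _ hne
  obtain ⟨r, hr1, hr⟩ := exists_sub_one_mem_and_smul_le_of_fg_of_le_sup
    Module.Finite.fg_top le_rfl (hN m hm)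
  have hrm : r ∈ m := hle (mem_colon_iff_le.2 hr)
  exact hm.ne_top ((Ideal.eq_top_iff_one m).2 (by simpa using m.sub_mem hrm hr1))

theorem LinearMap.surjective_of_forall_isMaximal_lTensor_surjective {N : Type*} [AddCommGroup N]
    [Module R N] [Module.Finite R N] (f : M →ₗ[R] N)
    (hf : ∀ m : Ideal R, m.IsMaximal → Surjective (f.lTensor (R ⧸ m))) :
    Surjective f := by
  refine range_eq_top.1 (Submodule.eq_top_of_forall_isMaximal_le_sup_smul_top _ fun m hm y _ => ?_)
  obtain ⟨s, hs⟩ := hf m hm (1 ⊗ₜ y)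
  obtain ⟨x, rfl⟩ := exists_one_tmul_eq m s
  rw [lTensor_tmul] at hs
  simpa using Submodule.add_mem_sup (mem_range_self f x) (sub_mem_smul_top_of_one_tmul_eq hs.symm)

theorem isUnit_of_forall_isMaximal_isUnit_one_tmul {A : Type*} [Ring A] [Algebra R A]
    [Module.Finite R A] {x : A} (hx : ∀ m : Ideal R, m.IsMaximal → IsUnit ((1 : R ⧸ m) ⊗ₜ[R] x)) :
    IsUnit x := by
  have hsurj : Surjective (LinearMap.mulLeft R x) := by
    refine LinearMap.surjective_of_forall_isMaximal_lTensor_surjective _ fun m hm => ?_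
    have hfibre : (LinearMap.mulLeft R x).lTensor (R ⧸ m) = LinearMap.mulLeft R (1 ⊗ₜ x) := by
      rw [LinearMap.mulLeft_tmul, LinearMap.mulLeft_one]
      rfl
    rw [hfibre]
    exact (IsUnit.isUnit_iff_mulLeft_bijective.1 (hx m hm)).2
  exact IsUnit.isUnit_iff_mulLeft_bijective.2
    (OrzechProperty.bijective_of_surjective_endomorphism _ hsurj)

theorem exists_one_tmul_eq_of_pairwise_isCoprime {ι : Type*} [Finite ι] {I : ι → Ideal R}
    (hI : Pairwise (IsCoprime on I)) (t : ∀ i, (R ⧸ I i) ⊗[R] M) :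
    ∃ x : M, ∀ i, (1 : R ⧸ I i) ⊗ₜ[R] x = t i := by
  classical
  have := Fintype.ofFinite ι
  choose e he using fun i => Ideal.pi_quotient_surjective hI (Pi.single i 1)
  have hsmul (i j) (y : (R ⧸ I j) ⊗[R] M) : e i • y = if i = j then y else 0 := by
    rw [← algebraMap_smul (R ⧸ I j), Ideal.Quotient.algebraMap_eq,
      show Ideal.Quotient.mk (I j) (e i) = _ from he i j]
    obtain rfl | hij := eq_or_ne i j
    · simp
    · simp [hij]
  choose y hy using fun i => exists_one_tmul_eq (I i) (t i)
  refine ⟨∑ i, e i • y i, fun j => ?_⟩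
  simp [tmul_sum, tmul_smul, hsmul, hy]

end Fibre

section Symmetrize

variable {R M : Type*} [CommRing R] [AddCommGroup M] [Module R M]

noncomputable def symmetrize (h2 : IsUnit (2 : R)) (τ : M →ₗ[R] M) (x : M) : M :=
  (↑h2.unit⁻¹ : R) • (x + τ x)

variable (h2 : IsUnit (2 : R)) {τ : M →ₗ[R] M}

theorem apply_symmetrize_of_involutive (hτ : Involutive τ) (x : M) :
    τ (symmetrize h2 τ x) = symmetrize h2 τ x := by
  rw [symmetrize, map_smul, map_add, hτ, add_comm]

theorem map_symmetrize_of_map_fixed {N : Type*} [AddCommGroup N] [Module R N] (f : M →ₗ[R] N)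
    {τ' : N → N} (hf : ∀ x, f (τ x) = τ' (f x)) {x : M} (hx : τ' (f x) = f x) :
    f (symmetrize h2 τ x) = f x := by
  rw [symmetrize, map_smul, map_add, hf, hx, ← two_smul R, smul_smul, h2.val_inv_mul, one_smul]

end Symmetrize

theorem involutive_mulLeft_comp {R A : Type*} [CommRing R] [Ring A] [Algebra R A]
    {σ : A →ₗ[R] A} (hmulσ : ∀ x y, σ (x * y) = σ y * σ x) (hinvol : Involutive σ)
    {ε : A} (hεc : ε ∈ Set.center A) (hε : σ ε * ε = 1) :
    Involutive (LinearMap.mulLeft R ε ∘ₗ σ) := by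
  intro x
  simp only [LinearMap.comp_apply, LinearMap.mulLeft_apply, hmulσ, hinvol x]
  rw [← mul_assoc, hεc.comm x, mul_assoc, hεc.comm, hε, mul_one]

theorem MaximalSpectrum.pairwise_isCoprime_asIdeal {R : Type*} [CommRing R] :
    Pairwise (IsCoprime on fun m : MaximalSpectrum R => m.asIdeal) := fun m m' hne =>
  Ideal.isCoprime_iff_sup_eq.2 (m.2.coprime_of_ne m'.2 fun h => hne (MaximalSpectrum.ext h))

theorem stmt_14_general {R A : Type*} [CommRing R] [Ring A] [Algebra R A]
    (h2 : IsUnit (2 : R)) [Finite (MaximalSpectrum R)] [Module.Finite R A]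
    (σ : A →ₗ[R] A)
    (hmulσ : ∀ x y, σ (x * y) = σ y * σ x)
    (hinvol : ∀ x, σ (σ x) = x)
    (ε : A) (hεc : ε ∈ Set.center A) (hε : σ ε * ε = 1)
    (h : ∀ m : Ideal R, m.IsMaximal →
      ∃ a : (R ⧸ m) ⊗[R] A,
        ((1 : R ⧸ m) ⊗ₜ[R] ε) * (LinearMap.baseChange (R ⧸ m) σ) a = a ∧ IsUnit a) :
    ∃ a : A, ε * σ a = a ∧ IsUnit a := by
  set τ := LinearMap.mulLeft R ε ∘ₗ σ
  choose a ha hu using fun m : MaximalSpectrum R => h m.asIdeal m.2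
  obtain ⟨b, hb⟩ :=
    exists_one_tmul_eq_of_pairwise_isCoprime MaximalSpectrum.pairwise_isCoprime_asIdeal a
  have hfibre (m : MaximalSpectrum R) :
      (1 : R ⧸ m.asIdeal) ⊗ₜ[R] symmetrize h2 τ b = a m := by
    have hfixed := ha m
    rw [← hb m] at hfixed ⊢
    refine map_symmetrize_of_map_fixed h2 (TensorProduct.mk R (R ⧸ m.asIdeal) A 1)
      (τ' := fun t => (1 ⊗ₜ ε) * σ.baseChange _ t) (fun x => ?_) hfixed
    simp [τ, Algebra.TensorProduct.tmul_mul_tmul]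
  exact ⟨_, apply_symmetrize_of_involutive h2 (involutive_mulLeft_comp hmulσ hinvol hεc hε) b,
    isUnit_of_forall_isMaximal_isUnit_one_tmul fun m hm => hfibre ⟨m, hm⟩ ▸ hu ⟨m, hm⟩⟩

/-- Let `R` be a semilocal commutative ring with `2` invertible, `(A, σ)` a finite
`R`-algebra with `R`-linear involution, and `ε` central with `σ ε * ε = 1`.  If for every
maximal ideal `m` of `R` there is an invertible `ε`-symmetric element in
`A(m) = (R ⧸ m) ⊗[R] A`, then there is an invertible `ε`-symmetric element in `A`. -/
theorem stmt_14 {R A : Type*} [CommRing R] [Ring A] [Algebra R A]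
    (h2 : IsUnit (2 : R)) [Finite (MaximalSpectrum R)] [Module.Finite R A]
    (σ : A →ₗ[R] A)
    (hmulσ : ∀ x y, σ (x * y) = σ y * σ x)
    (hone : σ 1 = 1) (hinvol : ∀ x, σ (σ x) = x)
    (ε : A) (hεc : ε ∈ Set.center A) (hε : σ ε * ε = 1)
    (h : ∀ m : Ideal R, m.IsMaximal →
      ∃ a : (R ⧸ m) ⊗[R] A,
        ((1 : R ⧸ m) ⊗ₜ[R] ε) * (LinearMap.baseChange (R ⧸ m) σ) a = a ∧ IsUnit a) :
    ∃ a : A, ε * σ a = a ∧ IsUnit a :=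
  stmt_14_general h2 σ hmulσ hinvol ε hεc hε h
end

section
/- Let R be a semilocal commutative ring with 2 invertible, (A, σ) a ring with involution over R, and (P, f) a unimodular (−1)-hermitian space over (R, id_R) — that is, P a finitely generated projective R-module with a unimodular alternating bilinear form f : P × P → R (f(x,y) = −f(y,x)). Then (P, f) is hyperbolic. -/
/-!
The trace ideal of a finitely generated projective module `P` is generated by an idempotent `e`
acting as the identity on `P`. Since `f` is unimodular, its values generate the trace ideal, so
outside every maximal ideal avoiding `e` some value `f x y` is a unit; the Chinese remainder
theorem over the finitely many maximal ideals glues these into a single pair with `f x y = e`.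
Then `x, y` span a hyperbolic plane whose orthogonal `W` is a complement, again finitely
generated projective with a unimodular alternating form, and of smaller total rank
`∑ₘ dim (R/m ⊗ W)`; induction on this rank concludes.
-/

open Module TensorProduct

attribute [local instance] Ideal.Quotient.field

namespace Module

variable (R P : Type*) [CommRing R] [AddCommGroup P] [Module R P]

def traceIdeal : Ideal R :=
  Ideal.span (Set.range fun φp : Dual R P × P => φp.1 φp.2)

variable {R P}

theorem apply_mem_traceIdeal (φ : Dual R P) (p : P) : φ p ∈ traceIdeal R P :=
  Ideal.subset_span ⟨(φ, p), rfl⟩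

theorem Projective.top_le_traceIdeal_smul [Projective R P] :
    (⊤ : Submodule R P) ≤ traceIdeal R P • ⊤ := by
  obtain ⟨s, hs⟩ := projective_def.mp ‹Projective R P›
  intro p _
  rw [← hs p, Finsupp.linearCombination_apply]
  exact Submodule.sum_mem _ fun a _ =>
    Submodule.smul_mem_smul (apply_mem_traceIdeal (Finsupp.lapply a ∘ₗ s) p) Submodule.mem_top

theorem exists_isIdempotentElem_mem_traceIdeal [Module.Finite R P] [Projective R P] :
    ∃ e ∈ traceIdeal R P, IsIdempotentElem e ∧ ∀ p : P, e • p = p := by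
  obtain ⟨e, he, hep⟩ := Submodule.exists_mem_and_smul_eq_self_of_fg_of_le_smul _ ⊤
    (Module.Finite.fg_top (R := R) (M := P)) Projective.top_le_traceIdeal_smul
  replace hep : ∀ p : P, e • p = p := fun p => hep p Submodule.mem_top
  have he_mul : ∀ t ∈ traceIdeal R P, e * t = t := by
    intro t ht
    induction ht using Submodule.span_induction with
    | mem _ h =>
      obtain ⟨⟨φ, p⟩, rfl⟩ := h
      rw [← smul_eq_mul, ← map_smul, hep]
    | zero => rw [mul_zero]
    | add _ _ _ _ h₁ h₂ => rw [mul_add, h₁, h₂]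
    | smul a _ _ h => rw [smul_eq_mul, mul_left_comm, h]
  exact ⟨e, he, he_mul e he, hep⟩

end Module

theorem exists_forall_apply_notMem {R M N : Type*} [CommRing R] [Finite (MaximalSpectrum R)]
    [AddCommGroup M] [Module R M] [AddCommGroup N] [Module R N] (f : M →ₗ[R] N →ₗ[R] R)
    (s : Set (MaximalSpectrum R)) (h : ∀ m ∈ s, ∃ x y, f x y ∉ m.asIdeal) :
    ∃ x y, ∀ m ∈ s, f x y ∉ m.asIdeal := by
  classical
  have := Fintype.ofFinite (MaximalSpectrum R)
  have hcop : Pairwise fun m m' : MaximalSpectrum R => IsCoprime m.asIdeal m'.asIdeal :=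
    fun m m' hne => Ideal.isCoprime_of_isMaximal (mt MaximalSpectrum.ext hne)
  choose r hr using fun k => Ideal.exists_forall_sub_mem_ideal hcop (Pi.single k 1)
  have hr' : ∀ k m : MaximalSpectrum R,
      Ideal.Quotient.mk m.asIdeal (r k) = if k = m then 1 else 0 := by
    intro k m
    rw [← map_one (Ideal.Quotient.mk m.asIdeal), ← map_zero (Ideal.Quotient.mk m.asIdeal),
      ← apply_ite, Ideal.Quotient.eq, eq_comm, ← Pi.single_apply]
    exact hr k m
  choose! x y hxy using h
  -- modulo `m`, the value at the two `r`-weighted sums collapses to `f (x m) (y m)`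
  refine ⟨∑ k, r k • x k, ∑ k, r k • y k, fun m hm hmem => hxy m hm ?_⟩
  rw [← Ideal.Quotient.eq_zero_iff_mem] at hmem ⊢
  simpa [map_sum, hr', Finset.sum_ite_eq', ite_mul] using hmem

theorem IsIdempotentElem.isUnit_add_one_sub {R : Type*} [CommRing R] {e a : R}
    (he : IsIdempotentElem e) (hea : e * a = a) (h : ∀ m : Ideal R, m.IsMaximal → e ∉ m → a ∉ m) :
    IsUnit (a + (1 - e)) := by
  by_contra hu
  obtain ⟨m, hm, ham⟩ := exists_max_ideal_of_mem_nonunits hu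
  by_cases hem : e ∈ m
  · have ha : a ∈ m := hea ▸ m.mul_mem_right a hem
    exact hm.ne_top <| (m.eq_top_iff_one).mpr <| by
      simpa using m.add_mem (m.sub_mem ham ha) hem
  · have h1e : 1 - e ∈ m := (hm.isPrime.mem_or_mem (by
      rw [mul_sub, mul_one, he.eq, sub_self]; exact m.zero_mem)).resolve_left hem
    exact h m hm hem (by simpa using m.sub_mem ham h1e)

theorem IsIdempotentElem.exists_isMaximal_notMem {R : Type*} [CommRing R] {e : R}
    (he : IsIdempotentElem e) (h0 : e ≠ 0) : ∃ m : Ideal R, m.IsMaximal ∧ e ∉ m := by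
  obtain ⟨m, hm, h1e⟩ := exists_max_ideal_of_mem_nonunits (a := 1 - e) fun hu =>
    h0 (hu.mul_left_eq_zero.mp (by rw [mul_sub, mul_one, he.eq, sub_self]))
  exact ⟨m, hm, fun hem => hm.ne_top ((m.eq_top_iff_one).mpr (by simpa using m.add_mem h1e hem))⟩

theorem exists_apply_eq_of_mem_traceIdeal {R P : Type*} [CommRing R] [Finite (MaximalSpectrum R)]
    [AddCommGroup P] [Module R P] {f : P →ₗ[R] P →ₗ[R] R} (hf : Function.Surjective f) {e : R}
    (he : e ∈ traceIdeal R P) (he_idem : IsIdempotentElem e) (hep : ∀ p : P, e • p = p) :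
    ∃ x y, f x y = e := by
  have hsupp : ∀ m ∈ {m : MaximalSpectrum R | e ∉ m.asIdeal}, ∃ x y, f x y ∉ m.asIdeal := by
    intro m hm
    by_contra! hfm
    refine hm (Ideal.span_le.mpr ?_ he)
    rintro _ ⟨⟨φ, p⟩, rfl⟩
    obtain ⟨x, rfl⟩ := hf φ
    exact hfm x p
  obtain ⟨x, y, hxy⟩ := exists_forall_apply_notMem f _ hsupp
  have hea : e * f x y = f x y := by
    rw [← smul_eq_mul, ← LinearMap.smul_apply, ← map_smul, hep]
  have hu := he_idem.isUnit_add_one_sub hea fun m hm hem => hxy ⟨m, hm⟩ hem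
  -- multiplying `u⁻¹ * (f x y + (1 - e)) = 1` by `e` gives `u⁻¹ * f x y = e`
  refine ⟨hu.unit⁻¹.val • x, y, ?_⟩
  rw [map_smul, LinearMap.smul_apply, smul_eq_mul]
  linear_combination e * hu.val_inv_mul - hu.unit⁻¹.val * hea + hu.unit⁻¹.val * he_idem.eq

namespace Submodule

variable {R M : Type*} [CommRing R] [AddCommGroup M] [Module R M] {H W : Submodule R M}

theorem finite_of_isCompl_s15 [Module.Finite R M] (h : IsCompl H W) : Module.Finite R H :=
  .of_surjective _ (H.projectionOnto_surjective h)

theorem projective_of_isCompl [Projective R M] (h : IsCompl H W) : Projective R H :=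
  .of_split H.subtype (H.projectionOnto W h) (LinearMap.ext (projectionOnto_apply_left h))

end Submodule

theorem finrank_baseChange_eq_add_of_isCompl {R K M : Type*} [CommRing R] [Field K] [Algebra R K]
    [AddCommGroup M] [Module R M] [Module.Finite R M] {H W : Submodule R M} (hHW : IsCompl H W) :
    finrank K (K ⊗[R] M) = finrank K (K ⊗[R] H) + finrank K (K ⊗[R] W) := by
  have := Submodule.finite_of_isCompl_s15 hHW
  have := Submodule.finite_of_isCompl_s15 hHW.symm
  rw [← finrank_prod, ((LinearEquiv.baseChange R K _ _ (H.prodEquivOfIsCompl W hHW)).symm ≪≫ₗ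
    prodRight R K K H W).finrank_eq]

theorem finrank_baseChange_pos {R K N : Type*} [CommRing R] [Field K] [Algebra R K]
    [AddCommGroup N] [Module R N] [Module.Finite R N] {x : N} (ψ : N →ₗ[R] R)
    (hψ : algebraMap R K (ψ x) ≠ 0) : 0 < finrank K (K ⊗[R] N) := by
  refine Module.finrank_pos_iff_exists_ne_zero.mpr ⟨1 ⊗ₜ x, fun h0 => hψ ?_⟩
  have := congrArg ((TensorProduct.AlgebraTensorModule.rid R K K).toLinearMap ∘ₗ ψ.baseChange K) h0
  simpa [Algebra.algebraMap_eq_smul_one] using this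

noncomputable def residueRankSum (R M : Type*) [CommRing R] [AddCommGroup M] [Module R M] : ℕ :=
  ∑ᶠ m : MaximalSpectrum R, finrank (R ⧸ m.asIdeal) ((R ⧸ m.asIdeal) ⊗[R] M)

theorem residueRankSum_lt {R M : Type*} [CommRing R] [Finite (MaximalSpectrum R)]
    [AddCommGroup M] [Module R M] [Module.Finite R M] {H W : Submodule R M} (hHW : IsCompl H W)
    {x : H} (ψ : H →ₗ[R] R) (m : MaximalSpectrum R) (hψ : ψ x ∉ m.asIdeal) :
    residueRankSum R W < residueRankSum R M := by
  have := Fintype.ofFinite (MaximalSpectrum R)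
  have := Submodule.finite_of_isCompl_s15 hHW
  simp only [residueRankSum, finsum_eq_sum_of_fintype, finrank_baseChange_eq_add_of_isCompl hHW]
  refine Finset.sum_lt_sum (fun _ _ => Nat.le_add_left _ _) ⟨m, Finset.mem_univ _, ?_⟩
  have := finrank_baseChange_pos (K := R ⧸ m.asIdeal) ψ
    (by rwa [Ideal.Quotient.algebraMap_eq, Ne, Ideal.Quotient.eq_zero_iff_mem])
  omega

theorem isCompl_sup_sup_of_disjoint {α : Type*} [Lattice α] [BoundedOrder α] [IsModularLattice α]
    {a b c d : α} (hab : Disjoint a b) (hcd : Disjoint c d) (h : IsCompl (a ⊔ b) (c ⊔ d)) :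
    IsCompl (a ⊔ c) (b ⊔ d) := by
  refine ⟨?_, codisjoint_iff.mpr ?_⟩
  · have hacb : Disjoint (a ⊔ c) b := by
      rw [sup_comm]
      exact hab.disjoint_sup_left_of_disjoint_sup_right (h.disjoint.mono_right le_sup_left).symm
    refine hacb.disjoint_sup_right_of_disjoint_sup_left ?_
    rw [sup_right_comm]
    exact hcd.disjoint_sup_left_of_disjoint_sup_right h.disjoint
  · rw [sup_sup_sup_comm, h.codisjoint.eq_top]

namespace LinearMap

variable {R M : Type*} [CommRing R] [AddCommGroup M] [Module R M]

def IsTotallyIsotropic (f : M →ₗ[R] M →ₗ[R] R) (L : Submodule R M) : Prop :=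
  ∀ x ∈ L, ∀ y ∈ L, f x y = 0

def IsHyperbolic (f : M →ₗ[R] M →ₗ[R] R) : Prop :=
  ∃ L N : Submodule R M, IsCompl L N ∧ f.IsTotallyIsotropic L ∧ f.IsTotallyIsotropic N

variable {f : M →ₗ[R] M →ₗ[R] R}

theorem IsAlt.isTotallyIsotropic_span_singleton (hf : f.IsAlt) (x : M) :
    f.IsTotallyIsotropic (Submodule.span R {x}) := by
  intro a ha b hb
  obtain ⟨s, rfl⟩ := Submodule.mem_span_singleton.mp ha
  obtain ⟨t, rfl⟩ := Submodule.mem_span_singleton.mp hb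
  simp [hf.self_eq_zero]

theorem IsTotallyIsotropic.sup (hf : f.IsRefl) {L N : Submodule R M}
    (hL : f.IsTotallyIsotropic L) (hN : f.IsTotallyIsotropic N)
    (hLN : ∀ x ∈ L, ∀ y ∈ N, f x y = 0) : f.IsTotallyIsotropic (L ⊔ N) := by
  intro a ha b hb
  obtain ⟨a₁, ha₁, a₂, ha₂, rfl⟩ := Submodule.mem_sup.mp ha
  obtain ⟨b₁, hb₁, b₂, hb₂, rfl⟩ := Submodule.mem_sup.mp hb
  simp only [map_add, add_apply, hL a₁ ha₁ b₁ hb₁, hN a₂ ha₂ b₂ hb₂, hLN a₁ ha₁ b₂ hb₂,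
    hf _ _ (hLN b₁ hb₁ a₂ ha₂), add_zero]

theorem IsTotallyIsotropic.map_subtype {W : Submodule R M} {L : Submodule R W}
    (hL : (f.compl₁₂ W.subtype W.subtype).IsTotallyIsotropic L) :
    f.IsTotallyIsotropic (L.map W.subtype) := by
  rintro _ ⟨a, ha, rfl⟩ _ ⟨b, hb, rfl⟩
  exact hL a ha b hb

theorem isHyperbolic_of_isCompl (hf : f.IsRefl) {H W L N : Submodule R M} (hHW : IsCompl H W)
    (horth : ∀ h ∈ H, ∀ w ∈ W, f h w = 0) (hLN : Disjoint L N) (hH : L ⊔ N = H)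
    (hL : f.IsTotallyIsotropic L) (hN : f.IsTotallyIsotropic N)
    (hW : (f.compl₁₂ W.subtype W.subtype).IsHyperbolic) : f.IsHyperbolic := by
  obtain ⟨L', N', hLN', hL', hN'⟩ := hW
  have hW' : L'.map W.subtype ⊔ N'.map W.subtype = W := by
    rw [← Submodule.map_sup, hLN'.sup_eq_top, Submodule.map_subtype_top]
  have hLN'' : Disjoint (L'.map W.subtype) (N'.map W.subtype) :=
    Submodule.disjoint_map W.injective_subtype hLN'.disjoint
  refine ⟨_, _, isCompl_sup_sup_of_disjoint hLN hLN'' (by rwa [hH, hW']), ?_, ?_⟩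
  · exact hL.sup hf hL'.map_subtype fun x hx y ⟨w, _, hw⟩ =>
      hw ▸ horth x (hH ▸ Submodule.mem_sup_left hx) w w.2
  · exact hN.sup hf hN'.map_subtype fun x hx y ⟨w, _, hw⟩ =>
      hw ▸ horth x (hH ▸ Submodule.mem_sup_right hx) w w.2

theorem bijective_compl₁₂_subtype_of_isCompl (hf : f.IsRefl) {H W : Submodule R M}
    (hHW : IsCompl H W) (horth : ∀ h ∈ H, ∀ w ∈ W, f h w = 0) (hbij : Function.Bijective f) :
    Function.Bijective (f.compl₁₂ W.subtype W.subtype) := by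
  have hdecomp : ∀ p : M, ∃ h ∈ H, ∃ w ∈ W, h + w = p := fun p =>
    Submodule.mem_sup.mp (hHW.sup_eq_top ▸ Submodule.mem_top)
  constructor
  · intro w₁ w₂ hw
    suffices f w₁ = f w₂ from Subtype.ext (hbij.1 this)
    ext p
    obtain ⟨h, hh, w, hw', rfl⟩ := hdecomp p
    simp only [map_add, hf _ _ (horth h hh _ w₁.2), hf _ _ (horth h hh _ w₂.2), zero_add]
    exact LinearMap.congr_fun hw ⟨w, hw'⟩
  · intro φ
    obtain ⟨p, hp⟩ := hbij.2 (φ ∘ₗ W.projectionOnto H hHW.symm)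
    obtain ⟨h, hh, w, hw, rfl⟩ := hdecomp p
    refine ⟨⟨w, hw⟩, LinearMap.ext fun w' => ?_⟩
    have := LinearMap.congr_fun hp (w' : M)
    rw [map_add, add_apply, horth h hh _ w'.2, zero_add] at this
    simpa [Submodule.projectionOnto_apply_left] using this

/-- `p ↦ f x p • y - f y p • x` is the projection onto the plane spanned by `x` and `y` along
its orthogonal. -/
theorem IsAlt.apply_smul_sub_apply_smul_eq_self (hf : f.IsAlt) {e : R} {x y : M}
    (hep : ∀ p : M, e • p = p) (hxy : f x y = e) {h : M}
    (hh : h ∈ Submodule.span R {x} ⊔ Submodule.span R {y}) : f x h • y - f y h • x = h := by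
  obtain ⟨_, ha, _, hb, rfl⟩ := Submodule.mem_sup.mp hh
  obtain ⟨a, rfl⟩ := Submodule.mem_span_singleton.mp ha
  obtain ⟨b, rfl⟩ := Submodule.mem_span_singleton.mp hb
  have hyx : f y x = -e := by rw [← hf.neg, hxy]
  simp only [map_add, map_smul, hf.self_eq_zero, hxy, hyx, smul_eq_mul]
  conv_rhs => rw [← hep x, ← hep y]
  module

theorem IsAlt.isCompl_span_sup_span (hf : f.IsAlt) {e : R} {x y : M}
    (hep : ∀ p : M, e • p = p) (hxy : f x y = e) :
    IsCompl (Submodule.span R {x} ⊔ Submodule.span R {y}) (ker (f x) ⊓ ker (f y)) := by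
  have hyx : f y x = -e := by rw [← hf.neg, hxy]
  have hfe : ∀ z p, f z p * e = f z p := fun z p => by
    rw [mul_comm, ← smul_eq_mul, ← smul_apply, ← map_smul, hep]
  refine ⟨Submodule.disjoint_def.mpr fun h hH hW => ?_, codisjoint_iff.mpr ?_⟩
  · rw [← hf.apply_smul_sub_apply_smul_eq_self hep hxy hH]
    simp_all
  · refine eq_top_iff.mpr fun p _ => ?_
    rw [← add_sub_cancel (f x p • y - f y p • x) p]
    refine Submodule.add_mem_sup (Submodule.sub_mem _ ?_ ?_) ⟨?_, ?_⟩
    · exact Submodule.mem_sup_right (Submodule.smul_mem _ _ (Submodule.mem_span_singleton_self y))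
    · exact Submodule.mem_sup_left (Submodule.smul_mem _ _ (Submodule.mem_span_singleton_self x))
    · simp [hxy, hf.self_eq_zero, hfe]
    · simp [hyx, hf.self_eq_zero, hfe]

theorem IsAlt.apply_eq_zero_of_mem_span_sup_span (hf : f.IsAlt) {e : R} {x y : M}
    (hep : ∀ p : M, e • p = p) (hxy : f x y = e) :
    ∀ h ∈ Submodule.span R {x} ⊔ Submodule.span R {y}, ∀ w ∈ ker (f x) ⊓ ker (f y),
      f h w = 0 := by
  intro h hh w hw
  rw [← hf.apply_smul_sub_apply_smul_eq_self hep hxy hh]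
  simp_all

theorem IsAlt.disjoint_span_span (hf : f.IsAlt) {e : R} {x y : M}
    (hep : ∀ p : M, e • p = p) (hxy : f x y = e) :
    Disjoint (Submodule.span R {x}) (Submodule.span R {y}) := by
  refine Submodule.disjoint_def.mpr fun h hx hy => ?_
  rw [← hf.apply_smul_sub_apply_smul_eq_self hep hxy (Submodule.mem_sup_left hx),
    hf.isTotallyIsotropic_span_singleton x x (Submodule.mem_span_singleton_self x) h hx,
    hf.isTotallyIsotropic_span_singleton y y (Submodule.mem_span_singleton_self y) h hy]
  simp

end LinearMap

theorem LinearMap.IsAlt.isHyperbolic {R : Type*} [CommRing R] [Finite (MaximalSpectrum R)]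
    {M : Type*} [AddCommGroup M] [Module R M] [Module.Finite R M] [Projective R M]
    {f : M →ₗ[R] M →ₗ[R] R} (hf : f.IsAlt) (hbij : Function.Bijective f) : f.IsHyperbolic := by
  induction hn : residueRankSum R M using Nat.strong_induction_on generalizing M with
  | _ n ih =>
  obtain ⟨e, he, he_idem, hep⟩ := exists_isIdempotentElem_mem_traceIdeal (R := R) (P := M)
  obtain ⟨x, y, hxy⟩ := exists_apply_eq_of_mem_traceIdeal hbij.2 he he_idem hep
  rcases eq_or_ne e 0 with rfl | he0
  · have htriv : ∀ p : M, p = 0 := fun p => by rw [← hep p, zero_smul]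
    exact ⟨⊥, ⊤, isCompl_bot_top, fun a _ b _ => by simp [htriv a],
      fun a _ b _ => by simp [htriv a]⟩
  obtain ⟨m, hm, hem⟩ := he_idem.exists_isMaximal_notMem he0
  have hHW := hf.isCompl_span_sup_span hep hxy
  have horth := hf.apply_eq_zero_of_mem_span_sup_span hep hxy
  have := Submodule.finite_of_isCompl_s15 hHW.symm
  have := Submodule.projective_of_isCompl hHW.symm
  have hlt := residueRankSum_lt hHW ((f.flip y).domRestrict _) ⟨m, hm⟩
    (x := ⟨x, Submodule.mem_sup_left (Submodule.mem_span_singleton_self x)⟩) (by simpa [hxy])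
  exact isHyperbolic_of_isCompl hf.isRefl hHW horth (hf.disjoint_span_span hep hxy) rfl
    (hf.isTotallyIsotropic_span_singleton x) (hf.isTotallyIsotropic_span_singleton y)
    (ih _ (hn ▸ hlt) (fun w => hf w)
      (bijective_compl₁₂_subtype_of_isCompl hf.isRefl hHW horth hbij) rfl)

/-- Over a semilocal commutative ring `R` with `2` invertible, every unimodular
alternating bilinear form on a finitely generated projective `R`-module is hyperbolic. -/
theorem stmt_15 {R P : Type*} [CommRing R] (h2 : IsUnit (2 : R))
    [Finite (MaximalSpectrum R)]
    [AddCommGroup P] [Module R P] [Module.Finite R P] [Module.Projective R P]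
    (f : P →ₗ[R] P →ₗ[R] R)
    (hskew : ∀ x y, f x y = -f y x)
    (hunimod : Function.Bijective f) :
    ∃ L M : Submodule R P, IsCompl L M ∧
      (∀ x ∈ L, ∀ y ∈ L, f x y = 0) ∧ ∀ x ∈ M, ∀ y ∈ M, f x y = 0 := by
  have hf : f.IsAlt := fun p =>
    h2.mul_right_eq_zero.mp (by linear_combination hskew p p)
  exact hf.isHyperbolic hunimod
end

section
/- Let R be a connected commutative ring with 2 invertible, S a quadratic étale R-algebra, and A = (S/R, α) the crossed-product (quaternion) algebra for α ∈ R×: A = S ⊕ uS with u² = α and s u = u s^θ for all s ∈ S, where θ is the standard involution of S. Then the center of A equals R. -/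
open TensorProduct

lemma aux_trace_top {R S : Type*} [CommRing R] [CommRing S] [Algebra R S]
    [Module.Finite R S] [Module.Projective R S]
    (hrank : ∀ m : Ideal R, m.IsMaximal →
      Module.finrank (R ⧸ m) ((R ⧸ m) ⊗[R] S) = 2) :
    Function.Injective (algebraMap R S) := by
  rcases subsingleton_or_nontrivial R with hR | hR
  · exact fun a b _ => Subsingleton.elim a b
  obtain ⟨f, hf⟩ := Module.projective_def'.mp (inferInstance : Module.Projective R S)
  set T : Ideal R := Ideal.span {r : R | ∃ (φ : S →ₗ[R] R) (s : S), φ s = r} with hT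
  have hTs : ∀ s : S, s ∈ T • (⊤ : Submodule R S) := by
    intro s
    have hs : Finsupp.linearCombination R id (f s) = s := by
      have := congrArg (fun g => g s) hf
      simpa using this
    rw [← hs, Finsupp.linearCombination_apply, Finsupp.sum]
    refine Submodule.sum_mem _ fun y hy => ?_
    refine Submodule.smul_mem_smul ?_ trivial
    exact Ideal.subset_span ⟨(Finsupp.lapply y).comp f, s, rfl⟩
  have hTtop : T = ⊤ := by
    by_contra hne
    obtain ⟨m, hm, hTm⟩ := Ideal.exists_le_maximal T hne
    have hsub : ∀ z : (R ⧸ m) ⊗[R] S, z = 0 := by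
      intro z
      induction z using TensorProduct.induction_on with
      | zero => rfl
      | tmul c s =>
        have hsm : s ∈ m • (⊤ : Submodule R S) :=
          Submodule.smul_mono hTm le_rfl (hTs s)
        refine Submodule.smul_induction_on hsm ?_ ?_
        · intro r hr n _
          rw [tmul_smul, smul_tmul']
          have hc0 : r • c = 0 := by
            rw [← algebraMap_smul (R ⧸ m) r c, Ideal.Quotient.algebraMap_eq,
              Ideal.Quotient.eq_zero_iff_mem.mpr hr, zero_smul]
          rw [hc0, zero_tmul]
        · intro x y hx hy
          rw [tmul_add, hx, hy, add_zero]
      | add x y hx hy => rw [hx, hy, add_zero]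
    have h2 := hrank m hm
    haveI : Subsingleton ((R ⧸ m) ⊗[R] S) := subsingleton_of_forall_eq 0 hsub
    rw [Module.finrank_zero_of_subsingleton] at h2
    exact two_ne_zero (by omega)
  intro a b hab
  have key : ∀ r : R, algebraMap R S r = 0 → r = 0 := by
    intro r hr
    have hJ : T ≤ LinearMap.ker (LinearMap.lsmul R R r) := by
      rw [hT, Ideal.span_le]
      rintro _ ⟨φ, s, rfl⟩
      have h0 : r • s = 0 := by rw [Algebra.smul_def, hr, zero_mul]
      simp only [SetLike.mem_coe, LinearMap.mem_ker, LinearMap.lsmul_apply, ← map_smul, h0,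
        map_zero]
    have h1 : (1 : R) ∈ T := hTtop ▸ trivial
    have := hJ h1
    simpa using this
  have := key (a - b) (by rw [map_sub, hab, sub_self])
  exact sub_eq_zero.mp this

lemma aux_e {R S : Type*} [CommRing R] [CommRing S] [Algebra R S]
    [Module.Finite R S] [Module.Projective R S] [Algebra.FormallyUnramified R S]
    (h2 : IsUnit (2 : R))
    (θ : S →ₐ[R] S) (hinvol : ∀ s, θ (θ s) = s)
    (hfix : ∀ s : S, θ s = s ↔ s ∈ (algebraMap R S).range)
    (hinj : Function.Injective (algebraMap R S)) :
    ∃ e : R, e * e = e ∧ (∀ v : S, θ v = -v → e • v = v) ∧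
      ∀ t : S, (∀ v : S, θ v = -v → t * v = 0) → t * algebraMap R S e = 0 := by
  classical
  set h : R := ((h2.unit⁻¹ : Rˣ) : R) with hh
  have hh2 : h * 2 = 1 := by
    rw [hh]
    nth_rewrite 2 [← h2.unit_spec]
    exact h2.unit.inv_mul
  set πm : S →ₗ[R] S := h • (LinearMap.id - θ.toLinearMap) with hπm
  have hπ : ∀ s : S, πm s = h • (s - θ s) := fun s => rfl
  have hθπ : ∀ s : S, θ (πm s) = - πm s := by
    intro s
    rw [hπ, map_smul, map_sub, hinvol, ← smul_neg, neg_sub]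
  have hπ_fix : ∀ v : S, θ v = -v → πm v = v := by
    intro v hv
    rw [hπ, hv, sub_neg_eq_add, ← two_smul R v, smul_smul, hh2, one_smul]
  set Sm : Submodule R S := LinearMap.range πm with hSm
  have hSmem : ∀ v ∈ Sm, θ v = -v := by
    rintro v ⟨s, rfl⟩
    exact hθπ s
  have hSmFG : Sm.FG := by
    have h1 : (Submodule.map πm ⊤).FG := Submodule.FG.map πm (Module.finite_def.mp inferInstance)
    rwa [Submodule.map_top] at h1
  set K : Ideal S := Ideal.span {x : S | ∃ v ∈ Sm, ∃ w ∈ Sm, x = v * w} with hK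
  set I : Ideal R := Ideal.span {r : R | ∃ v ∈ Sm, ∃ w ∈ Sm, algebraMap R S r = v * w} with hI
  have hc : algebraMap R S h * 2 = 1 := by
    rw [show (2 : S) = algebraMap R S 2 from (map_ofNat _ 2).symm, ← map_mul, hh2, map_one]
  -- the derivation
  obtain ⟨D, hD⟩ : ∃ D : Derivation R S (S ⧸ K), ∀ s, D s = Submodule.Quotient.mk (πm s) := by
    refine ⟨⟨(K.mkQ.restrictScalars R).comp πm, ?_, ?_⟩, fun s => rfl⟩
    · have : πm 1 = 0 := by rw [hπ, map_one, sub_self, smul_zero]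
      simp [this]
    · intro a b
      show Submodule.Quotient.mk (πm (a * b)) =
        a • Submodule.Quotient.mk (πm b) + b • Submodule.Quotient.mk (πm a)
      rw [← Submodule.Quotient.mk_smul, ← Submodule.Quotient.mk_smul,
        ← Submodule.Quotient.mk_add, Submodule.Quotient.eq]
      have hmem : πm a * πm b ∈ K :=
        Ideal.subset_span ⟨πm a, ⟨a, rfl⟩, πm b, ⟨b, rfl⟩, rfl⟩
      have key : πm (a * b) - (a • πm b + b • πm a) = -((2 : R) • (πm a * πm b)) := by
        simp only [hπ, map_mul, Algebra.smul_def, smul_eq_mul, map_ofNat, Algebra.algebraMap_self_apply]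
        linear_combination (algebraMap R S h * ((a - θ a) * (b - θ b))) * hc
      rw [key]
      exact K.neg_mem (Submodule.smul_of_tower_mem K (2 : R) hmem)
  have hπK : ∀ s : S, πm s ∈ K := by
    intro s
    have h0 : (KaehlerDifferential.D R S) s = 0 := Subsingleton.elim _ _
    have h1 := D.liftKaehlerDifferential_comp_D s
    rw [h0, map_zero] at h1
    have h2' : Submodule.Quotient.mk (πm s) = (0 : S ⧸ K) := by rw [← hD s, ← h1]
    exact (Submodule.Quotient.mk_eq_zero K).mp h2'
  have hle : Sm ≤ I • Sm := by
    rintro v ⟨s, rfl⟩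
    obtain ⟨c, hsupp, hsum⟩ := Submodule.mem_span_set.mp (hπK s)
    have hproj : πm (πm s) = πm s := hπ_fix _ (hθπ s)
    rw [← hproj, ← hsum, Finsupp.sum, map_sum]
    refine Submodule.sum_mem _ fun g hg => ?_
    obtain ⟨v', hv', w', hw', rfl⟩ := hsupp hg
    have hgθ : θ (v' * w') = v' * w' := by
      rw [map_mul, hSmem v' hv', hSmem w' hw', neg_mul_neg]
    obtain ⟨r, hr⟩ := (hfix _).mp hgθ
    have hrI : r ∈ I := Ideal.subset_span ⟨v', hv', w', hw', hr⟩
    have hmul : πm (c (v' * w') • (v' * w')) = r • πm (c (v' * w')) := by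
      simp only [hπ, smul_eq_mul, map_mul, hSmem v' hv', hSmem w' hw', neg_mul_neg,
        Algebra.smul_def, hr]
      ring
    rw [hmul]
    exact Submodule.smul_mem_smul hrI ⟨c (v' * w'), rfl⟩
  obtain ⟨e, heI, he⟩ := Submodule.exists_mem_and_smul_eq_self_of_fg_of_le_smul I Sm hSmFG hle
  have heSm : ∀ v : S, θ v = -v → e • v = v := by
    intro v hv
    exact he v ⟨v, hπ_fix v hv⟩
  have hkill : ∀ t : S, (∀ v : S, θ v = -v → t * v = 0) → t * algebraMap R S e = 0 := by
    intro t ht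
    have hJ : I ≤ LinearMap.ker ((LinearMap.mulLeft R t).comp (Algebra.linearMap R S)) := by
      rw [hI, Ideal.span_le]
      rintro _ ⟨v, hv, w, hw, hr⟩
      simp only [SetLike.mem_coe, LinearMap.mem_ker, LinearMap.comp_apply,
        Algebra.linearMap_apply, LinearMap.mulLeft_apply, hr]
      rw [← mul_assoc, ht v (hSmem v hv), zero_mul]
    have := hJ heI
    simpa using this
  have heid : e * e = e := by
    apply hinj
    rw [map_mul]
    have hJ : I ≤ LinearMap.ker ((LinearMap.mulLeft R (algebraMap R S e - 1)).comp
        (Algebra.linearMap R S)) := by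
      rw [hI, Ideal.span_le]
      rintro _ ⟨v, hv, w, hw, hr⟩
      simp only [SetLike.mem_coe, LinearMap.mem_ker, LinearMap.comp_apply,
        Algebra.linearMap_apply, LinearMap.mulLeft_apply, hr]
      have h1 : algebraMap R S e * (v * w) = v * w := by
        rw [← mul_assoc, ← Algebra.smul_def, he v hv]
      rw [sub_mul, h1, one_mul, sub_self]
    have := hJ heI
    simp only [LinearMap.mem_ker, LinearMap.comp_apply, Algebra.linearMap_apply,
      LinearMap.mulLeft_apply, sub_mul, one_mul, sub_eq_zero] at this
    exact this
  exact ⟨e, heid, heSm, hkill⟩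

/-- Let `R` be a connected commutative ring with `2` invertible, `S` a quadratic étale
`R`-algebra with standard involution `θ`, and `A = (S/R, α)` the crossed-product
(quaternion) algebra for a unit `α ∈ R×`: `A = S ⊕ uS` with `u² = α` and `s·u = u·θ(s)`
for all `s ∈ S`.  Then the center of `A` equals `R`. -/
theorem stmt_17 {R S A : Type*} [CommRing R] [CommRing S] [Algebra R S]
    [Ring A] [Algebra R A]
    (h2 : IsUnit (2 : R))
    (hconn : ∀ e : R, e * e = e → e = 0 ∨ e = 1)
    [Module.Finite R S] [Module.Projective R S] [Algebra.FormallyUnramified R S]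
    (hrank : ∀ m : Ideal R, m.IsMaximal →
      Module.finrank (R ⧸ m) ((R ⧸ m) ⊗[R] S) = 2)
    (θ : S →ₐ[R] S) (hinvol : ∀ s, θ (θ s) = s)
    (hfix : ∀ s : S, θ s = s ↔ s ∈ (algebraMap R S).range)
    (ι : S →ₐ[R] A) (u : A) (α : R) (hα : IsUnit α)
    (hbasis : ∀ x : A, ∃! p : S × S, x = ι p.1 + u * ι p.2)
    (husq : u * u = algebraMap R A α)
    (hcommu : ∀ s : S, ι s * u = u * ι (θ s)) :
    ∀ x : A, x ∈ Set.center A ↔ ∃ r : R, x = algebraMap R A r := by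
  intro x
  constructor
  · intro hx
    rcases subsingleton_or_nontrivial R with hR | hR
    · refine ⟨0, ?_⟩
      have h10 : (1 : A) = 0 := by
        calc (1 : A) = algebraMap R A 1 := (map_one _).symm
          _ = algebraMap R A 0 := by rw [Subsingleton.elim (1 : R) 0]
          _ = 0 := map_zero _
      haveI := subsingleton_of_zero_eq_one h10.symm
      exact Subsingleton.elim _ _
    have hinj := aux_trace_top (R := R) (S := S) hrank
    obtain ⟨e, heid, heSm, hkill⟩ := aux_e h2 θ hinvol hfix hinj
    have hcomm : ∀ b : A, b * x = x * b := Semigroup.mem_center_iff.mp hx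
    obtain ⟨⟨s, t⟩, hst, -⟩ := hbasis x
    simp only at hst
    have hαu : IsUnit (algebraMap R S α) := hα.map (algebraMap R S)
    have e1 : u * x = ι (algebraMap R S α * t) + u * ι s := by
      rw [hst, mul_add, ← mul_assoc u u, husq, ← ι.commutes α, ← map_mul, add_comm]
    have e2 : u * x = ι (algebraMap R S α * θ t) + u * ι (θ s) := by
      rw [hcomm u, hst, add_mul, hcommu s, mul_assoc u (ι t) u, hcommu t,
        ← mul_assoc u u, husq, ← ι.commutes α, ← map_mul, add_comm]
    obtain ⟨p, -, hup⟩ := hbasis (u * x)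
    have h1 := hup (algebraMap R S α * t, s) e1
    have h2' := hup (algebraMap R S α * θ t, θ s) e2
    have heq := h1.trans h2'.symm
    have hfst : algebraMap R S α * t = algebraMap R S α * θ t := congrArg Prod.fst heq
    have hsnd : s = θ s := congrArg Prod.snd heq
    have hθt : θ t = t := (hαu.mul_left_cancel hfst).symm
    have hts' : ∀ s' : S, t * s' = θ s' * t := by
      intro s'
      have e3 : ι s' * x = ι (s' * s) + u * ι (θ s' * t) := by
        rw [hst, mul_add, ← map_mul, ← mul_assoc (ι s') u (ι t), hcommu s',
          mul_assoc u (ι (θ s')) (ι t), ← map_mul]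
      have e4 : ι s' * x = ι (s' * s) + u * ι (t * s') := by
        rw [hcomm (ι s'), hst, add_mul, ← map_mul, mul_assoc u (ι t) (ι s'), ← map_mul,
          mul_comm s s']
      obtain ⟨q, -, huq⟩ := hbasis (ι s' * x)
      have h5 := (huq (s' * s, t * s') e4).trans (huq (s' * s, θ s' * t) e3).symm
      exact congrArg Prod.snd h5
    have ht0 : ∀ v : S, θ v = -v → t * v = 0 := by
      intro v hv
      have h5 := hts' v
      rw [hv, neg_mul, mul_comm v t] at h5
      have hy : (2 : R) • (t * v) = 0 := by
        rw [two_smul]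
        nth_rewrite 1 [h5]
        exact neg_add_cancel _
      have hh2 : ((h2.unit⁻¹ : Rˣ) : R) * 2 = 1 := by
        nth_rewrite 2 [← h2.unit_spec]
        exact h2.unit.inv_mul
      have h6 := congrArg (fun z => ((h2.unit⁻¹ : Rˣ) : R) • z) hy
      simpa [smul_smul, hh2] using h6
    have hte := hkill t ht0
    rcases hconn e heid with he0 | he1
    · exfalso
      have hθid : ∀ s' : S, θ s' = s' := by
        intro s'
        have hw : θ (s' - θ s') = -(s' - θ s') := by rw [map_sub, hinvol, neg_sub]
        have h7 := heSm _ hw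
        rw [he0, zero_smul] at h7
        exact (sub_eq_zero.mp h7.symm).symm
      have hsurj : Function.Surjective (algebraMap R S) := by
        intro s'
        obtain ⟨r, hr⟩ := (hfix s').mp (hθid s')
        exact ⟨r, hr⟩
      obtain ⟨m, hm⟩ := Ideal.exists_maximal R
      have h2rank := hrank m hm
      letI := Ideal.Quotient.field m
      have hle1 : Module.finrank (R ⧸ m) ((R ⧸ m) ⊗[R] S) ≤ 1 := by
        apply finrank_le_one ((1 : R ⧸ m) ⊗ₜ[R] (1 : S))
        intro w
        induction w using TensorProduct.induction_on with
        | zero => exact ⟨0, zero_smul _ _⟩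
        | tmul c s' =>
          obtain ⟨r, hr⟩ := hsurj s'
          refine ⟨c * Ideal.Quotient.mk m r, ?_⟩
          rw [smul_tmul', smul_eq_mul, mul_one, ← hr, Algebra.algebraMap_eq_smul_one,
            tmul_smul, smul_tmul', Algebra.smul_def, Ideal.Quotient.algebraMap_eq,
            mul_comm]
        | add a b ha hb =>
          obtain ⟨ca, hca⟩ := ha
          obtain ⟨cb, hcb⟩ := hb
          exact ⟨ca + cb, by rw [add_smul, hca, hcb]⟩
      omega
    · have ht : t = 0 := by
        rw [he1, map_one, mul_one] at hte
        exact hte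
      obtain ⟨r, hr⟩ := (hfix s).mp hsnd.symm
      refine ⟨r, ?_⟩
      rw [hst, ht, map_zero, mul_zero, add_zero, ← hr, ι.commutes]
  · rintro ⟨r, rfl⟩
    exact Semigroup.mem_center_iff.mpr fun g => (Algebra.commutes r g).symm
end
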